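/- arXiv:2506.04945 — 10 statements merged into one kernel-verified Lean document; each statement's English description precedes it below -/
import Mathlib

section
/- Suppose the estimator family f̂ is fitted (it satisfies the observational and single-intervention fitting equations). Then for every action profile a : Fin K → α, the joint-intervention prediction equals the sum of unconfounded contributions: Σ_{k} f̂_k a true = Σ_{k} μ_k a. -/
/-- **Algebraic core of Theorem 1 (identifiability).**
If the estimator family `fhat` is fitted to the observational and single-intervention
equations, then its joint-intervention prediction equals the sum of the unconfounded
contributions. -/
theorem fitted_estimator_identifies_joint_effect
    {K : ℕ} (hK : 1 ≤ K) {α : Type*}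
    (μ ν : Fin K → (Fin K → α) → ℝ)
    (fhat : Fin K → (Fin K → α) → Bool → ℝ)
    (hobs : ∀ a : Fin K → α, ∑ k, fhat k a false = ∑ k, ν k a)
    (hsint : ∀ (j : Fin K) (a : Fin K → α),
      fhat j a true + ∑ k ∈ Finset.univ.erase j, fhat k a false
        = μ j a + ∑ k ∈ Finset.univ.erase j, ν k a) :
    ∀ a : Fin K → α, ∑ k, fhat k a true = ∑ k, μ k a := by
  intro a
  have key : ∀ j : Fin K, fhat j a true = μ j a - ν j a + fhat j a false := by
    intro j
    have h1 := hsint j a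
    have h2 : ∑ k ∈ Finset.univ.erase j, fhat k a false
        = ∑ k, fhat k a false - fhat j a false := by
      rw [Finset.sum_erase_eq_sub (Finset.mem_univ j)]
    have h3 : ∑ k ∈ Finset.univ.erase j, ν k a
        = ∑ k, ν k a - ν j a := by
      rw [Finset.sum_erase_eq_sub (Finset.mem_univ j)]
    rw [h2, h3, hobs a] at h1
    linarith
  calc ∑ k, fhat k a true = ∑ k, (μ k a - ν k a + fhat k a false) := by
        exact Finset.sum_congr rfl fun k _ => key k
    _ = ∑ k, μ k a - ∑ k, ν k a + ∑ k, fhat k a false := by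
        rw [Finset.sum_add_distrib, Finset.sum_sub_distrib]
    _ = ∑ k, μ k a := by rw [hobs a]; ring
end

section
/- Suppose the estimator family f̂ is fitted (it satisfies the observational and single-intervention fitting equations). Then for every subset S ⊆ Fin K and every action profile a : Fin K → α, the mixed-intervention prediction is correct: Σ_{k ∈ S} f̂_k a true + Σ_{k ∉ S} f̂_k a false = Σ_{k ∈ S} μ_k a + Σ_{k ∉ S} ν_k a. -/
/-- **Algebraic core of Proposition 1 (mixed interventional effects).**
If the estimator family `fhat` is fitted to the observational and single-intervention
equations, then for any subset `S` of the actions, the mixed-intervention prediction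
is correct. -/
theorem fitted_estimator_identifies_mixed_effect
    {K : ℕ} (hK : 1 ≤ K) {α : Type*}
    (μ ν : Fin K → (Fin K → α) → ℝ)
    (fhat : Fin K → (Fin K → α) → Bool → ℝ)
    (hobs : ∀ a : Fin K → α, ∑ k, fhat k a false = ∑ k, ν k a)
    (hsint : ∀ (j : Fin K) (a : Fin K → α),
      fhat j a true + ∑ k ∈ Finset.univ.erase j, fhat k a false
        = μ j a + ∑ k ∈ Finset.univ.erase j, ν k a) :
    ∀ (S : Finset (Fin K)) (a : Fin K → α),
      (∑ k ∈ S, fhat k a true) + ∑ k ∈ Sᶜ, fhat k a false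
        = (∑ k ∈ S, μ k a) + ∑ k ∈ Sᶜ, ν k a := by
  intro S a
  have key : ∀ j : Fin K, fhat j a true = μ j a - ν j a + fhat j a false := by
    intro j
    have h1 := hsint j a
    have h2 : fhat j a false + ∑ k ∈ Finset.univ.erase j, fhat k a false
        = ν j a + ∑ k ∈ Finset.univ.erase j, ν k a := by
      have e1 := Finset.add_sum_erase Finset.univ (fun k => fhat k a false) (Finset.mem_univ j)
      have e2 := Finset.add_sum_erase Finset.univ (fun k => ν k a) (Finset.mem_univ j)
      have := hobs a
      linarith
    linarith
  have hsum : ∑ k ∈ S, fhat k a true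
      = ∑ k ∈ S, (μ k a - ν k a + fhat k a false) :=
    Finset.sum_congr rfl (fun k _ => key k)
  have hsplit : ∀ g : Fin K → ℝ, ∑ k ∈ S, g k + ∑ k ∈ Sᶜ, g k = ∑ k, g k := by
    intro g
    rw [← Finset.sum_union (disjoint_compl_right), Finset.union_compl]
  have h3 := hsplit (fun k => fhat k a false)
  have h4 := hsplit (fun k => ν k a)
  simp only [Finset.sum_add_distrib, Finset.sum_sub_distrib] at hsum
  have := hobs a
  linarith
end

section
/- For every action profile a : Fin K → α with P({Ā = a}) > 0, the conditional expectation of the joint-intervention outcome decomposes into unconfounded per-action terms: E[Ȳ | {Ā = a}] = Σ_{k} Σ_{c : γ} f_k(a_k, c) · P(C_k = c). -/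
open MeasureTheory ProbabilityTheory
open scoped ENNReal

/-- Codomain family for the exogenous noises `W₀,…,W_{K-1}, V₀,…,V_{K-1}, ξ₀,…,ξ_{K-1}, U`. -/
def NoiseCodom (K : ℕ) (α β γ : Type) : Fin K ⊕ Fin K ⊕ Fin K ⊕ Unit → Type :=
  Sum.elim (fun _ => γ) (Sum.elim (fun _ => β) (Sum.elim (fun _ => α) fun _ => ℝ))

/-- The measurable-space structure on each noise codomain. -/
def noiseMS (K : ℕ) (α β γ : Type) [MeasurableSpace α] [MeasurableSpace β]
    [MeasurableSpace γ] : (i : Fin K ⊕ Fin K ⊕ Fin K ⊕ Unit) →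
      MeasurableSpace (NoiseCodom K α β γ i)
  | .inl _ => inferInstanceAs (MeasurableSpace γ)
  | .inr (.inl _) => inferInstanceAs (MeasurableSpace β)
  | .inr (.inr (.inl _)) => inferInstanceAs (MeasurableSpace α)
  | .inr (.inr (.inr _)) => inferInstanceAs (MeasurableSpace ℝ)

/-- The family of all exogenous noise variables, as a single indexed family. -/
def noiseFam {Ω α β γ : Type} {K : ℕ} (W : Fin K → Ω → γ) (V : Fin K → Ω → β)
    (ξ : Fin K → Ω → α) (U : Ω → ℝ) :
    (i : Fin K ⊕ Fin K ⊕ Fin K ⊕ Unit) → Ω → NoiseCodom K α β γ i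
  | .inl k => W k
  | .inr (.inl k) => V k
  | .inr (.inr (.inl k)) => ξ k
  | .inr (.inr (.inr _)) => U

/-- Observational actions: `A_k := g_k((A_i)_{i<k}, C_k, V_k)` with `C_k := W_k`. -/
def Aobs {Ω α β γ : Type} {K : ℕ}
    (g : (k : Fin K) → ((i : Fin K) → i < k → α) → γ → β → α)
    (W : Fin K → Ω → γ) (V : Fin K → Ω → β) (k : Fin K) (ω : Ω) : α :=
  g k (fun i _ => Aobs g W V i ω) (W k ω) (V k ω)
termination_by k.1
decreasing_by exact ‹_ < k›

/-- Single-intervention actions `do(A_j)`: `Ã^j_j := ξ_j`, and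
`Ã^j_k := g_k((Ã^j_i)_{i<k}, C_k, V_k)` for `k ≠ j`. -/
def Asingle {Ω α β γ : Type} {K : ℕ}
    (g : (k : Fin K) → ((i : Fin K) → i < k → α) → γ → β → α)
    (W : Fin K → Ω → γ) (V : Fin K → Ω → β) (ξ : Fin K → Ω → α)
    (j : Fin K) (k : Fin K) (ω : Ω) : α :=
  if k = j then ξ j ω
  else g k (fun i _ => Asingle g W V ξ j i ω) (W k ω) (V k ω)
termination_by k.1
decreasing_by exact ‹_ < k›

/-- Mixed-intervention actions `do(A_S)`: `Â^S_k := ξ_k` for `k ∈ S`, and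
`Â^S_k := g_k((Â^S_i)_{i<k}, C_k, V_k)` for `k ∉ S`. -/
def Amix {Ω α β γ : Type} {K : ℕ}
    (g : (k : Fin K) → ((i : Fin K) → i < k → α) → γ → β → α)
    (W : Fin K → Ω → γ) (V : Fin K → Ω → β) (ξ : Fin K → Ω → α)
    (S : Finset (Fin K)) (k : Fin K) (ω : Ω) : α :=
  if k ∈ S then ξ k ω
  else g k (fun i _ => Amix g W V ξ S i ω) (W k ω) (V k ω)
termination_by k.1
decreasing_by exact ‹_ < k›

/-- The additive outcome `Y := Σ_k f_k(A_k, C_k) + U` for a given family of actions. -/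
def outcome {Ω α γ : Type} {K : ℕ} (f : Fin K → α → γ → ℝ)
    (A : Fin K → Ω → α) (W : Fin K → Ω → γ) (U : Ω → ℝ) (ω : Ω) : ℝ :=
  (∑ k, f k (A k ω) (W k ω)) + U ω

/-- The event `{A = a} = ⋂_k {A_k = a_k}`. -/
def eventEq {Ω α : Type} {K : ℕ} (A : Fin K → Ω → α) (a : Fin K → α) : Set Ω :=
  ⋂ k, {ω | A k ω = a k}

/-- Decomposition of the joint-interventional conditional expectation
`E[Ȳ | Ā = a] = Σ_k Σ_c f_k(a_k, c) · P(C_k = c)`, where `Ā_k := ξ_k`. -/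
theorem joint_intervention_decomposition
    {Ω : Type} [MeasurableSpace Ω] (P : MeasureTheory.Measure Ω) [MeasureTheory.IsProbabilityMeasure P]
    {K : ℕ} (hK : 1 ≤ K)
    {α β γ : Type} [Fintype α] [Nonempty α] [MeasurableSpace α] [MeasurableSingletonClass α]
    [Fintype β] [Nonempty β] [MeasurableSpace β] [MeasurableSingletonClass β]
    [Fintype γ] [Nonempty γ] [MeasurableSpace γ] [MeasurableSingletonClass γ]
    (W : Fin K → Ω → γ) (V : Fin K → Ω → β) (ξ : Fin K → Ω → α) (U : Ω → ℝ)
    (hW : ∀ k, Measurable (W k)) (hV : ∀ k, Measurable (V k))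
    (hξ : ∀ k, Measurable (ξ k)) (hU : Measurable U)
    (hindep : iIndepFun (m := noiseMS K α β γ) (noiseFam W V ξ U) P)
    (hUint : MeasureTheory.Integrable U P) (hU0 : ∫ ω, U ω ∂P = 0)
    (g : (k : Fin K) → ((i : Fin K) → i < k → α) → γ → β → α)
    (f : Fin K → α → γ → ℝ)
    (a : Fin K → α) (ha : 0 < P (eventEq ξ a)) :
    ∫ ω, outcome f ξ W U ω ∂(P[|eventEq ξ a])
      = ∑ k, ∑ c : γ, f k (a k) c * (P {ω | W k ω = c}).toReal := by

  classical
  set F := noiseFam W V ξ U with hF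
  have hmeas : ∀ i, @Measurable Ω _ _ (noiseMS K α β γ i) (F i) := by
    rintro (k | k | k | u)
    · exact hW k
    · exact hV k
    · exact hξ k
    · exact hU
  set Ev := eventEq ξ a with hEv
  have hE : MeasurableSet Ev := by
    exact MeasurableSet.iInter fun k => (hξ k) (measurableSet_singleton (a k))
  have hPE0 : P Ev ≠ 0 := ha.ne'
  have hPEtop : P Ev ≠ ∞ := measure_ne_top P Ev
  -- the index set of the ξ variables
  set S : Finset (Fin K ⊕ Fin K ⊕ Fin K ⊕ Unit) :=
    Finset.univ.image (fun k : Fin K => Sum.inr (Sum.inr (Sum.inl k))) with hS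
  have hkS : ∀ k : Fin K, (Sum.inr (Sum.inr (Sum.inl k)) : Fin K ⊕ Fin K ⊕ Fin K ⊕ Unit) ∈ S :=
    fun k => Finset.mem_image_of_mem _ (Finset.mem_univ k)
  set X : Ω → ((i : S) → NoiseCodom K α β γ i) := fun ω i => F i ω with hX
  set M : Set ((i : S) → NoiseCodom K α β γ i) :=
    ⋂ k : Fin K, (fun x : (i : S) → NoiseCodom K α β γ i =>
      x ⟨Sum.inr (Sum.inr (Sum.inl k)), hkS k⟩) ⁻¹' ({a k} : Set α) with hM
  have hXE : Ev = X ⁻¹' M := by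
    ext ω
    simp only [hEv, eventEq, hM, Set.mem_iInter, Set.mem_preimage, Set.mem_setOf_eq,
      Set.mem_singleton_iff]
    rfl
  have hMmeas : MeasurableSet[MeasurableSpace.pi (m := fun i : S => noiseMS K α β γ i)] M := by
    refine MeasurableSet.iInter fun k => ?_
    exact @measurable_pi_apply _ _ (fun i : S => noiseMS K α β γ i)
      ⟨Sum.inr (Sum.inr (Sum.inl k)), hkS k⟩ _ (measurableSet_singleton (a k))
  -- independence of {ξ = a} from each W j
  have keyW : ∀ (j : Fin K) (c : γ),
      P (Ev ∩ {ω | W j ω = c}) = P Ev * P {ω | W j ω = c} := by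
    intro j c
    have hdisj : Disjoint S ({Sum.inl j} : Finset (Fin K ⊕ Fin K ⊕ Fin K ⊕ Unit)) := by
      simp [hS]
    have hind := hindep.indepFun_finset S {Sum.inl j} hdisj hmeas
    have hjT : (Sum.inl j : Fin K ⊕ Fin K ⊕ Fin K ⊕ Unit) ∈
        ({Sum.inl j} : Finset (Fin K ⊕ Fin K ⊕ Fin K ⊕ Unit)) := Finset.mem_singleton_self _
    set N : Set ((i : ({Sum.inl j} : Finset (Fin K ⊕ Fin K ⊕ Fin K ⊕ Unit))) →
        NoiseCodom K α β γ i) :=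
      (fun y : (i : ({Sum.inl j} : Finset (Fin K ⊕ Fin K ⊕ Fin K ⊕ Unit))) →
          NoiseCodom K α β γ i => y ⟨Sum.inl j, hjT⟩) ⁻¹' ({c} : Set γ) with hN
    have hNmeas : MeasurableSet[MeasurableSpace.pi
        (m := fun i : ({Sum.inl j} : Finset (Fin K ⊕ Fin K ⊕ Fin K ⊕ Unit)) =>
          noiseMS K α β γ i)] N :=
      @measurable_pi_apply _ _ (fun i : ({Sum.inl j} : Finset (Fin K ⊕ Fin K ⊕ Fin K ⊕ Unit)) =>
        noiseMS K α β γ i) ⟨Sum.inl j, hjT⟩ _ (measurableSet_singleton c)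
    have h2 : {ω | W j ω = c} =
        (fun ω (i : ({Sum.inl j} : Finset (Fin K ⊕ Fin K ⊕ Fin K ⊕ Unit))) => F i ω) ⁻¹' N := by
      ext ω; rfl
    rw [hXE, h2]
    exact hind.measure_inter_preimage_eq_mul M N hMmeas hNmeas
  -- independence of {ξ = a} from U : the set integral of U over Ev vanishes
  have keyU : ∫ ω in Ev, U ω ∂P = 0 := by
    have hdisj : Disjoint S ({Sum.inr (Sum.inr (Sum.inr ()))} :
        Finset (Fin K ⊕ Fin K ⊕ Fin K ⊕ Unit)) := by simp [hS]
    have hind := hindep.indepFun_finset S {Sum.inr (Sum.inr (Sum.inr ()))} hdisj hmeas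
    set T : Finset (Fin K ⊕ Fin K ⊕ Fin K ⊕ Unit) := {Sum.inr (Sum.inr (Sum.inr ()))} with hT
    have huT : (Sum.inr (Sum.inr (Sum.inr ())) : Fin K ⊕ Fin K ⊕ Fin K ⊕ Unit) ∈ T :=
      Finset.mem_singleton_self _
    set φ : ((i : S) → NoiseCodom K α β γ i) → ℝ := M.indicator (fun _ => (1:ℝ)) with hφ
    set ψ : ((i : T) → NoiseCodom K α β γ i) → ℝ :=
      fun y => y ⟨Sum.inr (Sum.inr (Sum.inr ())), huT⟩ with hψ
    have hφm : @Measurable _ _ (MeasurableSpace.pi (m := fun i : S => noiseMS K α β γ i)) _ φ :=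
      measurable_const.indicator hMmeas
    have hψm : @Measurable _ _ (MeasurableSpace.pi (m := fun i : T => noiseMS K α β γ i)) _ ψ :=
      @measurable_pi_apply _ _ (fun i : T => noiseMS K α β γ i)
        ⟨Sum.inr (Sum.inr (Sum.inr ())), huT⟩
    have hcomp := hind.comp hφm hψm
    have h1 : φ ∘ X = Ev.indicator (fun _ => (1:ℝ)) := by
      funext ω
      by_cases hω : ω ∈ Ev
      · have : X ω ∈ M := by rw [hXE] at hω; exact hω
        simp [hφ, Set.indicator_of_mem, this, hω]
      · have : X ω ∉ M := by rw [hXE] at hω; exact hω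
        simp [hφ, Set.indicator_of_notMem, this, hω]
    have h2 : (ψ ∘ (fun ω (i : T) => F i ω)) = U := by funext ω; rfl
    rw [h1, h2] at hcomp
    have hindic : Integrable (Ev.indicator (fun _ => (1:ℝ))) P :=
      (integrable_const (1:ℝ)).indicator hE
    have := (hcomp : IndepFun (Ev.indicator (fun _ => (1:ℝ))) U P).integral_mul_eq_mul_integral hindic.aestronglyMeasurable hUint.aestronglyMeasurable
    have heq : ∀ ω, Ev.indicator (fun _ => (1:ℝ)) ω * U ω = Ev.indicator U ω := by
      intro ω
      by_cases hω : ω ∈ Ev <;> simp [hω]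
    rw [← integral_indicator hE]
    calc ∫ ω, Ev.indicator U ω ∂P = ∫ ω, Ev.indicator (fun _ => (1:ℝ)) ω * U ω ∂P := by
          simp_rw [heq]
      _ = (∫ ω, Ev.indicator (fun _ => (1:ℝ)) ω ∂P) * ∫ ω, U ω ∂P := this
      _ = 0 := by rw [hU0, mul_zero]
  -- measurability of the W-level sets
  have hWset : ∀ (k : Fin K) (c : γ), MeasurableSet {ω | W k ω = c} :=
    fun k c => (hW k) (measurableSet_singleton c)
  -- rewrite the conditional integral
  rw [ProbabilityTheory.cond, integral_smul_measure]
  -- compute the set integral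
  have hcong : ∫ ω in Ev, outcome f ξ W U ω ∂P
      = ∫ ω in Ev, ((∑ k, ∑ c : γ, ({ω' | W k ω' = c}.indicator
          (fun _ => f k (a k) c) ω)) + U ω) ∂P := by
    refine setIntegral_congr_fun hE fun ω hω => ?_
    have hξa : ∀ k, ξ k ω = a k := by
      intro k
      exact Set.mem_iInter.mp hω k
    simp only [outcome]
    congr 1
    refine Finset.sum_congr rfl fun k _ => ?_
    rw [hξa k]
    have : ∀ c : γ, ({ω' | W k ω' = c}.indicator (fun _ => f k (a k) c) ω)
        = if W k ω = c then f k (a k) c else 0 := by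
      intro c
      by_cases h : W k ω = c <;> simp [Set.indicator, h]
    simp_rw [this]
    rw [Finset.sum_ite_eq Finset.univ (W k ω) (fun c => f k (a k) c)]
    simp
  rw [hcong]
  have hint1 : Integrable (fun ω => ∑ k, ∑ c : γ,
      ({ω' | W k ω' = c}.indicator (fun _ => f k (a k) c) ω)) (P.restrict Ev) := by
    refine integrable_finset_sum _ fun k _ => integrable_finset_sum _ fun c _ => ?_
    exact ((integrable_const _).indicator (hWset k c)).restrict
  rw [integral_add hint1 hUint.restrict, keyU, add_zero]
  rw [integral_finset_sum _ fun k _ => integrable_finset_sum _ fun c _ =>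
    ((integrable_const _).indicator (hWset k c)).restrict]
  have hterm : ∀ k : Fin K, ∫ ω in Ev, (∑ c : γ,
      ({ω' | W k ω' = c}.indicator (fun _ => f k (a k) c) ω)) ∂P
      = ∑ c : γ, (P Ev).toReal * (f k (a k) c * (P {ω | W k ω = c}).toReal) := by
    intro k
    rw [integral_finset_sum _ fun c _ => ((integrable_const _).indicator (hWset k c)).restrict]
    refine Finset.sum_congr rfl fun c _ => ?_
    rw [setIntegral_indicator (hWset k c), setIntegral_const, measureReal_def, keyW k c, ENNReal.toReal_mul, smul_eq_mul]
    ring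
  simp_rw [hterm]
  have hcancel : ((P Ev)⁻¹).toReal * (P Ev).toReal = 1 := by
    rw [ENNReal.toReal_inv]
    exact inv_mul_cancel₀ (by simp [ENNReal.toReal_ne_zero, hPE0, hPEtop])
  rw [smul_eq_mul]
  simp_rw [← Finset.mul_sum]
  rw [← mul_assoc, hcancel, one_mul]
end

section
/- For every index j and every action profile a : Fin K → α such that P({Ã^j = a}) > 0 and P({A = a}) > 0, the conditional expectation of the single-intervention outcome decomposes as: E[Ỹ^j | {Ã^j = a}] = Σ_{c : γ} f_j(a_j, c) · P(C_j = c) + Σ_{k ≠ j} Σ_{c : γ} f_k(a_k, c) · P[{C_k = c} | {A = a}], where the conditional probabilities in the second sum are taken in the observational model. -/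
open MeasureTheory ProbabilityTheory
open scoped ENNReal

section Ev

variable {Ω α β γ : Type} {K : ℕ}

/-- The per-index observational action event. -/
def Tev (g : (k : Fin K) → ((i : Fin K) → i < k → α) → γ → β → α)
    (W : Fin K → Ω → γ) (V : Fin K → Ω → β) (a : Fin K → α) (k : Fin K) : Set Ω :=
  {ω | g k (fun i _ => a i) (W k ω) (V k ω) = a k}

/-- The per-index single-intervention action event. -/
def Sev (g : (k : Fin K) → ((i : Fin K) → i < k → α) → γ → β → α)
    (W : Fin K → Ω → γ) (V : Fin K → Ω → β) (ξ : Fin K → Ω → α)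
    (a : Fin K → α) (j k : Fin K) : Set Ω :=
  if k = j then {ω | ξ j ω = a j} else Tev g W V a k

/-- Noise-index block for the observational per-index event. -/
def FTs (K : ℕ) (k : Fin K) : Finset (Fin K ⊕ Fin K ⊕ Fin K ⊕ Unit) :=
  {Sum.inl k, Sum.inr (Sum.inl k)}

/-- Noise-index block for the single-intervention per-index event. -/
def FSs {K : ℕ} (j k : Fin K) : Finset (Fin K ⊕ Fin K ⊕ Fin K ⊕ Unit) :=
  if k = j then {Sum.inr (Sum.inr (Sum.inl j))} else FTs K k

lemma FTs_disj {k l : Fin K} (h : k ≠ l) : Disjoint (FTs K k) (FTs K l) := by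
  simp only [FTs, Finset.disjoint_left, Finset.mem_insert, Finset.mem_singleton]
  rintro x (rfl | rfl) (h' | h') <;> simp_all

lemma FSs_disj {j k l : Fin K} (h : k ≠ l) : Disjoint (FSs j k) (FSs j l) := by
  unfold FSs
  by_cases hk : k = j <;> by_cases hl : l = j
  · exact absurd (hk.trans hl.symm) h
  · simp only [if_pos hk, if_neg hl, FTs]
    simp [Finset.disjoint_left]
  · simp only [if_neg hk, if_pos hl, FTs]
    simp [Finset.disjoint_left]
  · simp only [if_neg hk, if_neg hl]
    exact FTs_disj h

lemma FSs_disj_inl (j k : Fin K) : Disjoint ({Sum.inl j} : Finset (Fin K ⊕ Fin K ⊕ Fin K ⊕ Unit)) (FSs j k) := by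
  unfold FSs
  by_cases hk : k = j
  · simp [if_pos hk]
  · simp only [if_neg hk, FTs]
    simp [Finset.disjoint_left, Ne.symm hk, fun h : j = k => hk h.symm]

lemma FSs_not_mem_U (j k : Fin K) : Sum.inr (Sum.inr (Sum.inr ())) ∉ FSs j k := by
  unfold FSs
  by_cases hk : k = j <;> simp [hk, FTs]

lemma eventEq_Aobs_decomp (g : (k : Fin K) → ((i : Fin K) → i < k → α) → γ → β → α)
    (W : Fin K → Ω → γ) (V : Fin K → Ω → β) (a : Fin K → α) :
    eventEq (Aobs g W V) a = ⋂ k, Tev g W V a k := by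
  ext ω
  simp only [eventEq, Tev, Set.mem_iInter, Set.mem_setOf_eq]
  constructor
  · intro h k
    have hk := h k
    rw [Aobs] at hk
    have heq : (fun i (_ : i < k) => Aobs g W V i ω) = fun i (_ : i < k) => a i := by
      funext i hi; exact h i
    rwa [heq] at hk
  · intro h
    have main : ∀ n : ℕ, ∀ k : Fin K, k.1 < n → Aobs g W V k ω = a k := by
      intro n
      induction n with
      | zero => intro k hk; omega
      | succ n ih =>
        intro k hk
        rw [Aobs]
        have heq : (fun i (_ : i < k) => Aobs g W V i ω) = fun i (_ : i < k) => a i := by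
          funext i hi; exact ih i (by omega)
        rw [heq]; exact h k
    exact fun k => main K k k.2

lemma eventEq_Asingle_decomp (g : (k : Fin K) → ((i : Fin K) → i < k → α) → γ → β → α)
    (W : Fin K → Ω → γ) (V : Fin K → Ω → β) (ξ : Fin K → Ω → α)
    (a : Fin K → α) (j : Fin K) :
    eventEq (Asingle g W V ξ j) a = ⋂ k, Sev g W V ξ a j k := by
  classical
  ext ω
  simp only [eventEq, Sev, Tev, Set.mem_iInter]
  constructor
  · intro h k
    by_cases hkj : k = j
    · subst hkj
      have hk : Asingle g W V ξ k k ω = a k := h k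
      rw [Asingle.eq_def, if_pos rfl] at hk
      simp [hk]
    · have hk : Asingle g W V ξ j k ω = a k := h k
      rw [Asingle.eq_def, if_neg hkj] at hk
      have heq : (fun i (_ : i < k) => Asingle g W V ξ j i ω) = fun i (_ : i < k) => a i := by
        funext i hi; exact h i
      rw [heq] at hk
      simp [hkj, hk]
  · intro h
    have main : ∀ n : ℕ, ∀ k : Fin K, k.1 < n → Asingle g W V ξ j k ω = a k := by
      intro n
      induction n with
      | zero => intro k hk; omega
      | succ n ih =>
        intro k hk
        by_cases hkj : k = j
        · subst hkj
          rw [Asingle.eq_def, if_pos rfl]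
          have hj := h k
          rwa [if_pos rfl, Set.mem_setOf_eq] at hj
        · rw [Asingle.eq_def, if_neg hkj]
          have heq : (fun i (_ : i < k) => Asingle g W V ξ j i ω) = fun i (_ : i < k) => a i := by
            funext i hi; exact ih i (by omega)
          rw [heq]
          have hk2 := h k
          rwa [if_neg hkj, Set.mem_setOf_eq] at hk2
    exact fun k => main K k k.2

end Ev

lemma blocks_meas_iInter {Ω : Type} [MeasurableSpace Ω] {ι κ : Type} [Fintype κ] [DecidableEq ι]
    {P : Measure Ω} [IsProbabilityMeasure P]
    {βi : ι → Type} {mβ : ∀ i, MeasurableSpace (βi i)}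
    {φ : ∀ i, Ω → βi i} (hφ : ∀ i, Measurable (φ i))
    (hindep : iIndepFun (m := mβ) φ P)
    (F : κ → Finset ι) (hdisj : ∀ k l, k ≠ l → Disjoint (F k) (F l))
    (E : κ → Set Ω)
    (hE : ∀ k, ∃ B : Set (∀ i : F k, βi i), MeasurableSet B ∧
        E k = (fun ω => fun i : F k => φ i ω) ⁻¹' B)
    (s : Finset κ) :
    P (⋂ k ∈ s, E k) = ∏ k ∈ s, P (E k) := by
  classical
  choose B hBmeas hBeq using hE
  induction s using Finset.induction with
  | empty => simp
  | @insert m s hm ih =>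
    set G := s.biUnion F with hG
    have hGdisj : Disjoint (F m) G := by
      rw [hG, Finset.disjoint_biUnion_right]
      exact fun k hk => hdisj m k (by rintro rfl; exact hm hk)
    have hmem : ∀ k (_ : k ∈ s) (i : F k), (i : ι) ∈ G := by
      intro k hk i
      exact Finset.mem_biUnion.2 ⟨k, hk, i.2⟩
    set ρ : ∀ k (_ : k ∈ s), (∀ i : G, βi i) → (∀ i : F k, βi i) :=
      fun k hk x i => x ⟨i.1, hmem k hk i⟩ with hρdef
    have hρ : ∀ k hk, Measurable (ρ k hk) :=
      fun k hk => measurable_pi_lambda _ (fun i => measurable_pi_apply _)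
    set B' : Set (∀ i : G, βi i) := ⋂ k, ⋂ (hk : k ∈ s), (ρ k hk) ⁻¹' B k with hB'def
    have hB' : MeasurableSet B' :=
      MeasurableSet.iInter fun k => MeasurableSet.iInter fun hk => (hρ k hk) (hBmeas k)
    have hrest : (⋂ k ∈ s, E k) = (fun ω => fun i : G => φ i ω) ⁻¹' B' := by
      ext ω
      simp only [Set.mem_iInter, Set.mem_preimage, hB'def, hρdef, hBeq]
    have hIndep2 := hindep.indepFun_finset (F m) G hGdisj hφ
    have hmul := hIndep2.measure_inter_preimage_eq_mul (B m) B' (hBmeas m) hB'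
    rw [Finset.set_biInter_insert, Finset.prod_insert hm, ← ih, hrest, hBeq m, hmul]

lemma integrable_comp_finite {Ω δ : Type} [MeasurableSpace Ω] (μ : Measure Ω) [IsFiniteMeasure μ]
    [Fintype δ] [MeasurableSpace δ] [MeasurableSingletonClass δ] {X : Ω → δ}
    (hX : Measurable X) (φ : δ → ℝ) :
    Integrable (fun ω => φ (X ω)) μ := by
  classical
  have key : (fun ω => φ (X ω))
      = fun ω => ∑ d : δ, Set.indicator {ω' | X ω' = d} (fun _ => φ d) ω := by
    funext ω
    rw [Finset.sum_eq_single (X ω)]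
    · simp [Set.indicator_of_mem, Set.mem_setOf_eq]
    · intro d _ hd
      exact Set.indicator_of_notMem (by simp [hd.symm]) _
    · simp
  rw [key]
  refine integrable_finset_sum _ (fun d _ => ?_)
  refine (integrable_indicator_iff (hX (measurableSet_singleton d))).2 ?_
  exact integrableOn_const (measure_ne_top _ _)

lemma integral_comp_finite {Ω δ : Type} [MeasurableSpace Ω] (μ : Measure Ω) [IsFiniteMeasure μ]
    [Fintype δ] [MeasurableSpace δ] [MeasurableSingletonClass δ] {X : Ω → δ}
    (hX : Measurable X) (φ : δ → ℝ) :
    ∫ ω, φ (X ω) ∂μ = ∑ d : δ, φ d * (μ {ω | X ω = d}).toReal := by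
  classical
  have key : (fun ω => φ (X ω))
      = fun ω => ∑ d : δ, Set.indicator {ω' | X ω' = d} (fun _ => φ d) ω := by
    funext ω
    rw [Finset.sum_eq_single (X ω)]
    · simp [Set.indicator_of_mem, Set.mem_setOf_eq]
    · intro d _ hd
      exact Set.indicator_of_notMem (by simp [hd.symm]) _
    · simp
  rw [key, integral_finset_sum]
  · refine Finset.sum_congr rfl (fun d _ => ?_)
    have hms : MeasurableSet {ω' | X ω' = d} := hX (measurableSet_singleton d)
    rw [integral_indicator hms, setIntegral_const, smul_eq_mul, mul_comm]
    rfl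
  · intro d _
    refine (integrable_indicator_iff (hX (measurableSet_singleton d))).2 ?_
    exact integrableOn_const (measure_ne_top _ _)

open scoped ENNReal
lemma ennreal_cancel {x y r : ℝ≥0∞} (hx0 : x ≠ 0) (hxt : x ≠ ∞)
    (hr0 : r ≠ 0) (hrt : r ≠ ∞) : (x * r)⁻¹ * (y * r) = x⁻¹ * y := by
  rw [ENNReal.mul_inv (Or.inl hx0) (Or.inl hxt)]
  calc x⁻¹ * r⁻¹ * (y * r) = x⁻¹ * y * (r⁻¹ * r) := by ring
  _ = x⁻¹ * y := by rw [ENNReal.inv_mul_cancel hr0 hrt, mul_one]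

/-- Decomposition of the single-interventional conditional expectation:
`E[Ỹ^j | Ã^j = a] = Σ_c f_j(a_j,c)·P(C_j = c) + Σ_{k≠j} Σ_c f_k(a_k,c)·P(C_k = c | A = a)`. -/
theorem single_intervention_decomposition
    {Ω : Type} [MeasurableSpace Ω] (P : MeasureTheory.Measure Ω) [MeasureTheory.IsProbabilityMeasure P]
    {K : ℕ} (hK : 1 ≤ K)
    {α β γ : Type} [Fintype α] [Nonempty α] [MeasurableSpace α] [MeasurableSingletonClass α]
    [Fintype β] [Nonempty β] [MeasurableSpace β] [MeasurableSingletonClass β]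
    [Fintype γ] [Nonempty γ] [MeasurableSpace γ] [MeasurableSingletonClass γ]
    (W : Fin K → Ω → γ) (V : Fin K → Ω → β) (ξ : Fin K → Ω → α) (U : Ω → ℝ)
    (hW : ∀ k, Measurable (W k)) (hV : ∀ k, Measurable (V k))
    (hξ : ∀ k, Measurable (ξ k)) (hU : Measurable U)
    (hindep : iIndepFun (m := noiseMS K α β γ) (noiseFam W V ξ U) P)
    (hUint : MeasureTheory.Integrable U P) (hU0 : ∫ ω, U ω ∂P = 0)
    (g : (k : Fin K) → ((i : Fin K) → i < k → α) → γ → β → α)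
    (f : Fin K → α → γ → ℝ)
    (j : Fin K) (a : Fin K → α)
    (ha1 : 0 < P (eventEq (Asingle g W V ξ j) a))
    (ha2 : 0 < P (eventEq (Aobs g W V) a)) :
    ∫ ω, outcome f (Asingle g W V ξ j) W U ω ∂(P[|eventEq (Asingle g W V ξ j) a])
      = (∑ c : γ, f j (a j) c * (P {ω | W j ω = c}).toReal)
        + ∑ k ∈ Finset.univ.erase j, ∑ c : γ,
            f k (a k) c * ((P[|eventEq (Aobs g W V) a]) {ω | W k ω = c}).toReal := by
  classical
  letI mπ : ∀ i, MeasurableSpace (NoiseCodom K α β γ i) := noiseMS K α β γ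
  have hnf : ∀ i, Measurable (noiseFam W V ξ U i) := by
    rintro (k | k | k | u)
    exacts [hW k, hV k, hξ k, hU]
  have hobs : eventEq (Aobs g W V) a = ⋂ k, Tev g W V a k := eventEq_Aobs_decomp g W V a
  have hsing : eventEq (Asingle g W V ξ j) a = ⋂ k, Sev g W V ξ a j k :=
    eventEq_Asingle_decomp g W V ξ a j
  -- measurability of the per-index events
  have hTmeas : ∀ k, MeasurableSet (Tev g W V a k) := by
    intro k
    exact ((hW k).prodMk (hV k))
      (MeasurableSet.of_discrete (s := {p : γ × β | g k (fun i _ => a i) p.1 p.2 = a k}))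
  have hSmeas : ∀ k, MeasurableSet (Sev g W V ξ a j k) := by
    intro k
    unfold Sev
    split
    · exact hξ j (measurableSet_singleton (a j))
    · exact hTmeas k
  have hFmeas : MeasurableSet (eventEq (Asingle g W V ξ j) a) := by
    rw [hsing]; exact MeasurableSet.iInter fun k => hSmeas k
  have hEmeas : MeasurableSet (eventEq (Aobs g W V) a) := by
    rw [hobs]; exact MeasurableSet.iInter fun k => hTmeas k
  -- positivity
  have hTpos : ∀ k, P (Tev g W V a k) ≠ 0 := by
    intro k
    have h := lt_of_lt_of_le ha2 (measure_mono (le_of_eq_of_le hobs (Set.iInter_subset _ k)))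
    exact h.ne'
  have hSpos : ∀ k, P (Sev g W V ξ a j k) ≠ 0 := by
    intro k
    have h := lt_of_lt_of_le ha1 (measure_mono (le_of_eq_of_le hsing (Set.iInter_subset _ k)))
    exact h.ne'
  -- block representations
  have h1 : ∀ k : Fin K, Sum.inl k ∈ FTs K k := by intro k; simp [FTs]
  have h2 : ∀ k : Fin K, Sum.inr (Sum.inl k) ∈ FTs K k := by intro k; simp [FTs]
  have hpair : ∀ k : Fin K, Measurable (fun x : (i : FTs K k) → NoiseCodom K α β γ i =>
      ((x ⟨Sum.inl k, h1 k⟩, x ⟨Sum.inr (Sum.inl k), h2 k⟩) : γ × β)) := by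
    intro k
    exact Measurable.prodMk (measurable_pi_apply _) (measurable_pi_apply _)
  have hTrep : ∀ k, ∃ B : Set ((i : FTs K k) → NoiseCodom K α β γ i),
      MeasurableSet B ∧
        Tev g W V a k = (fun ω => fun i : FTs K k => noiseFam W V ξ U i ω) ⁻¹' B := by
    intro k
    refine ⟨(fun x : (i : FTs K k) → NoiseCodom K α β γ i =>
        ((x ⟨Sum.inl k, h1 k⟩, x ⟨Sum.inr (Sum.inl k), h2 k⟩) : γ × β)) ⁻¹'
        {p : γ × β | g k (fun i _ => a i) p.1 p.2 = a k}, ?_, rfl⟩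
    exact (hpair k) MeasurableSet.of_discrete
  have hSrep : ∀ k, ∃ B : Set ((i : FSs j k) → NoiseCodom K α β γ i),
      MeasurableSet B ∧
        Sev g W V ξ a j k = (fun ω => fun i : FSs j k => noiseFam W V ξ U i ω) ⁻¹' B := by
    intro k
    by_cases hkj : k = j
    · subst hkj
      have hmem : Sum.inr (Sum.inr (Sum.inl k)) ∈ FSs k k := by simp [FSs]
      have hB : MeasurableSet ({a k} : Set α) := measurableSet_singleton _
      refine ⟨(fun x : (i : FSs k k) → NoiseCodom K α β γ i =>
          ((x ⟨Sum.inr (Sum.inr (Sum.inl k)), hmem⟩) : α)) ⁻¹' {a k},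
        (show Measurable (fun x : (i : FSs k k) → NoiseCodom K α β γ i =>
          ((x ⟨Sum.inr (Sum.inr (Sum.inl k)), hmem⟩) : α)) from measurable_pi_apply _) hB, ?_⟩
      have hev : Sev g W V ξ a k k = {ω | ξ k ω = a k} := by simp [Sev]
      rw [hev]; rfl
    · have hFS : FSs j k = FTs K k := if_neg hkj
      have hev : Sev g W V ξ a j k = Tev g W V a k := if_neg hkj
      rw [hFS, hev]
      exact hTrep k
  have hWrep : ∀ c : γ, ∃ B : Set ((i : ({Sum.inl j} : Finset (Fin K ⊕ Fin K ⊕ Fin K ⊕ Unit))) →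
        NoiseCodom K α β γ i),
      MeasurableSet B ∧
        {ω | W j ω = c} = (fun ω => fun i : ({Sum.inl j} : Finset (Fin K ⊕ Fin K ⊕ Fin K ⊕ Unit)) =>
          noiseFam W V ξ U i ω) ⁻¹' B := by
    intro c
    have hB : MeasurableSet ({c} : Set γ) := measurableSet_singleton _
    exact ⟨(fun x : (i : ({Sum.inl j} : Finset (Fin K ⊕ Fin K ⊕ Fin K ⊕ Unit))) →
          NoiseCodom K α β γ i => ((x ⟨Sum.inl j, Finset.mem_singleton_self _⟩) : γ)) ⁻¹' {c},
      (show Measurable (fun x : (i : ({Sum.inl j} : Finset (Fin K ⊕ Fin K ⊕ Fin K ⊕ Unit))) →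
          NoiseCodom K α β γ i => ((x ⟨Sum.inl j, Finset.mem_singleton_self _⟩) : γ)) from
        measurable_pi_apply _) hB, rfl⟩
  have hTcrep : ∀ (m : Fin K) (c : γ), ∃ B : Set ((i : FTs K m) → NoiseCodom K α β γ i),
      MeasurableSet B ∧
        (Tev g W V a m ∩ {ω | W m ω = c})
          = (fun ω => fun i : FTs K m => noiseFam W V ξ U i ω) ⁻¹' B := by
    intro m c
    refine ⟨(fun x : (i : FTs K m) → NoiseCodom K α β γ i =>
        ((x ⟨Sum.inl m, h1 m⟩, x ⟨Sum.inr (Sum.inl m), h2 m⟩) : γ × β)) ⁻¹'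
        {p : γ × β | g m (fun i _ => a i) p.1 p.2 = a m ∧ p.1 = c}, ?_, rfl⟩
    exact (hpair m) MeasurableSet.of_discrete
  -- product formulas
  have hPT : P (⋂ k, Tev g W V a k) = ∏ k, P (Tev g W V a k) := by
    have h := blocks_meas_iInter hnf hindep (FTs K) (fun k l hkl => FTs_disj hkl)
      (Tev g W V a) hTrep Finset.univ
    simpa using h
  have hPS : P (⋂ k, Sev g W V ξ a j k) = ∏ k, P (Sev g W V ξ a j k) := by
    have h := blocks_meas_iInter hnf hindep (FSs j) (fun k l hkl => FSs_disj hkl)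
      (Sev g W V ξ a j) hSrep Finset.univ
    simpa using h
  -- conditional probability of W j under the single-intervention conditioning
  have keyJ : ∀ c : γ,
      (P[|eventEq (Asingle g W V ξ j) a]) {ω | W j ω = c} = P {ω | W j ω = c} := by
    intro c
    rw [cond_apply hFmeas]
    have hdisjO : ∀ o o' : Option (Fin K), o ≠ o' →
        Disjoint (Option.elim o ({Sum.inl j} : Finset (Fin K ⊕ Fin K ⊕ Fin K ⊕ Unit)) (FSs j))
          (Option.elim o' ({Sum.inl j} : Finset (Fin K ⊕ Fin K ⊕ Fin K ⊕ Unit)) (FSs j)) := by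
      rintro (_ | k) (_ | l) hne
      · exact absurd rfl hne
      · exact FSs_disj_inl j l
      · exact (FSs_disj_inl j k).symm
      · exact FSs_disj (fun h => hne (by rw [h]))
    have hrepO : ∀ o : Option (Fin K),
        ∃ B : Set ((i : (Option.elim o ({Sum.inl j} : Finset (Fin K ⊕ Fin K ⊕ Fin K ⊕ Unit))
            (FSs j) : Finset _)) → NoiseCodom K α β γ i),
          MeasurableSet B ∧
            Option.elim o {ω | W j ω = c} (Sev g W V ξ a j)
              = (fun ω => fun i : (Option.elim o ({Sum.inl j} :
                  Finset (Fin K ⊕ Fin K ⊕ Fin K ⊕ Unit)) (FSs j) : Finset _) =>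
                  noiseFam W V ξ U i ω) ⁻¹' B := by
      rintro (_ | k)
      · exact hWrep c
      · exact hSrep k
    have hOpt := blocks_meas_iInter hnf hindep
      (fun o : Option (Fin K) => Option.elim o ({Sum.inl j} : Finset (Fin K ⊕ Fin K ⊕ Fin K ⊕ Unit)) (FSs j))
      hdisjO
      (fun o => Option.elim o {ω | W j ω = c} (Sev g W V ξ a j))
      hrepO Finset.univ
    have hset : (⋂ o ∈ (Finset.univ : Finset (Option (Fin K))),
        Option.elim o {ω | W j ω = c} (Sev g W V ξ a j))
          = eventEq (Asingle g W V ξ j) a ∩ {ω | W j ω = c} := by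
      rw [hsing]
      ext ω
      simp only [Finset.mem_univ, Set.iInter_true, Set.mem_iInter, Set.mem_inter_iff, Option.forall]
      tauto
    rw [hset] at hOpt
    have hprodO : ∏ o ∈ (Finset.univ : Finset (Option (Fin K))),
        P (Option.elim o {ω | W j ω = c} (Sev g W V ξ a j))
          = P {ω | W j ω = c} * ∏ k, P (Sev g W V ξ a j k) := by
      rw [Fintype.prod_option]
      rfl
    rw [hOpt, hprodO, ← hPS, ← hsing]
    rw [mul_comm (P {ω | W j ω = c}) _, ← mul_assoc,
      ENNReal.inv_mul_cancel ha1.ne' (measure_ne_top _ _), one_mul]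
  -- conditional probability of W m (m ≠ j) agrees between the two conditionings
  have keyNe : ∀ m : Fin K, m ≠ j → ∀ c : γ,
      (P[|eventEq (Asingle g W V ξ j) a]) {ω | W m ω = c}
        = (P[|eventEq (Aobs g W V) a]) {ω | W m ω = c} := by
    intro m hmj c
    rw [cond_apply hFmeas, cond_apply hEmeas]
    have hS'rep : ∀ k, ∃ B : Set ((i : FSs j k) → NoiseCodom K α β γ i),
        MeasurableSet B ∧
          (Sev g W V ξ a j k ∩ (if k = m then {ω | W m ω = c} else Set.univ))
            = (fun ω => fun i : FSs j k => noiseFam W V ξ U i ω) ⁻¹' B := by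
      intro k
      by_cases hkm : k = m
      · rw [hkm, if_pos rfl, show FSs j m = FTs K m from if_neg hmj,
          show Sev g W V ξ a j m = Tev g W V a m from if_neg hmj]
        exact hTcrep m c
      · rw [if_neg hkm, Set.inter_univ]
        exact hSrep k
    have hT'rep : ∀ k, ∃ B : Set ((i : FTs K k) → NoiseCodom K α β γ i),
        MeasurableSet B ∧
          (Tev g W V a k ∩ (if k = m then {ω | W m ω = c} else Set.univ))
            = (fun ω => fun i : FTs K k => noiseFam W V ξ U i ω) ⁻¹' B := by
      intro k
      by_cases hkm : k = m
      · rw [hkm, if_pos rfl]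
        exact hTcrep m c
      · rw [if_neg hkm, Set.inter_univ]
        exact hTrep k
    have hPS' := blocks_meas_iInter hnf hindep (FSs j) (fun k l h => FSs_disj h)
      (fun k => Sev g W V ξ a j k ∩ (if k = m then {ω | W m ω = c} else Set.univ))
      hS'rep Finset.univ
    have hPT' := blocks_meas_iInter hnf hindep (FTs K) (fun k l h => FTs_disj h)
      (fun k => Tev g W V a k ∩ (if k = m then {ω | W m ω = c} else Set.univ))
      hT'rep Finset.univ
    have hU1 : (⋂ k, (if k = m then {ω | W m ω = c} else (Set.univ : Set Ω)))
        = {ω | W m ω = c} := by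
      ext ω
      simp only [Set.mem_iInter]
      constructor
      · intro h
        have := h m
        rwa [if_pos rfl] at this
      · intro h k
        by_cases hk : k = m
        · rwa [if_pos hk]
        · rw [if_neg hk]; trivial
    have hset1 : (⋂ k ∈ Finset.univ,
        (Sev g W V ξ a j k ∩ (if k = m then {ω | W m ω = c} else Set.univ)))
          = eventEq (Asingle g W V ξ j) a ∩ {ω | W m ω = c} := by
      simp only [Finset.mem_univ, Set.iInter_true]
      rw [Set.iInter_inter_distrib, hU1, ← hsing]
    have hset2 : (⋂ k ∈ Finset.univ,
        (Tev g W V a k ∩ (if k = m then {ω | W m ω = c} else Set.univ)))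
          = eventEq (Aobs g W V) a ∩ {ω | W m ω = c} := by
      simp only [Finset.mem_univ, Set.iInter_true]
      rw [Set.iInter_inter_distrib, hU1, ← hobs]
    rw [hset1] at hPS'
    rw [hset2] at hPT'
    rw [hPS', hPT', hsing, hobs, hPS, hPT]
    have hsplitS : ∏ k, P (Sev g W V ξ a j k)
        = P (Tev g W V a m) * ∏ k ∈ Finset.univ.erase m, P (Sev g W V ξ a j k) := by
      rw [← Finset.mul_prod_erase Finset.univ _ (Finset.mem_univ m),
        show Sev g W V ξ a j m = Tev g W V a m from if_neg hmj]
    have hsplitT : ∏ k, P (Tev g W V a k)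
        = P (Tev g W V a m) * ∏ k ∈ Finset.univ.erase m, P (Tev g W V a k) :=
      (Finset.mul_prod_erase Finset.univ _ (Finset.mem_univ m)).symm
    have hsplitS' : ∏ k, P (Sev g W V ξ a j k ∩ (if k = m then {ω | W m ω = c} else Set.univ))
        = P (Tev g W V a m ∩ {ω | W m ω = c})
          * ∏ k ∈ Finset.univ.erase m, P (Sev g W V ξ a j k) := by
      rw [← Finset.mul_prod_erase Finset.univ _ (Finset.mem_univ m)]
      congr 1
      · rw [if_pos rfl, show Sev g W V ξ a j m = Tev g W V a m from if_neg hmj]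
      · refine Finset.prod_congr rfl fun k hk => ?_
        rw [if_neg (Finset.ne_of_mem_erase hk), Set.inter_univ]
    have hsplitT' : ∏ k, P (Tev g W V a k ∩ (if k = m then {ω | W m ω = c} else Set.univ))
        = P (Tev g W V a m ∩ {ω | W m ω = c})
          * ∏ k ∈ Finset.univ.erase m, P (Tev g W V a k) := by
      rw [← Finset.mul_prod_erase Finset.univ _ (Finset.mem_univ m)]
      congr 1
      · rw [if_pos rfl]
      · refine Finset.prod_congr rfl fun k hk => ?_
        rw [if_neg (Finset.ne_of_mem_erase hk), Set.inter_univ]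
    rw [hsplitS, hsplitT, hsplitS', hsplitT']
    rw [ennreal_cancel (hTpos m) (measure_ne_top _ _)
        (Finset.prod_ne_zero_iff.2 fun k _ => hSpos k)
        (ENNReal.prod_ne_top fun k _ => measure_ne_top _ _),
      ennreal_cancel (hTpos m) (measure_ne_top _ _)
        (Finset.prod_ne_zero_iff.2 fun k _ => hTpos k)
        (ENNReal.prod_ne_top fun k _ => measure_ne_top _ _)]
  -- the exogenous noise U has zero conditional mean
  have hUcond : ∫ ω, U ω ∂(P[|eventEq (Asingle g W V ξ j) a]) = 0 := by
    choose BS hBSmeas hBSeq using hSrep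
    have hmemG : ∀ (k : Fin K) (i : FSs j k),
        (i : Fin K ⊕ Fin K ⊕ Fin K ⊕ Unit) ∈ Finset.univ.biUnion (FSs j) :=
      fun k i => Finset.mem_biUnion.2 ⟨k, Finset.mem_univ k, i.2⟩
    set B' : Set ((i : (Finset.univ.biUnion (FSs j) : Finset _)) → NoiseCodom K α β γ i) :=
      ⋂ k, (fun x : (i : (Finset.univ.biUnion (FSs j) : Finset _)) → NoiseCodom K α β γ i =>
        fun i : FSs j k => x ⟨i.1, hmemG k i⟩) ⁻¹' BS k with hB'
    have hB'meas : MeasurableSet B' :=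
      MeasurableSet.iInter fun k =>
        (measurable_pi_lambda _ fun i => measurable_pi_apply _) (hBSmeas k)
    have hrep : eventEq (Asingle g W V ξ j) a
        = (fun ω => fun i : (Finset.univ.biUnion (FSs j) : Finset _) =>
            noiseFam W V ξ U i ω) ⁻¹' B' := by
      rw [hsing]
      ext ω
      simp only [Set.mem_iInter, Set.mem_preimage, hB', hBSeq]
    have hdisjU : Disjoint (Finset.univ.biUnion (FSs j))
        ({Sum.inr (Sum.inr (Sum.inr ()))} : Finset (Fin K ⊕ Fin K ⊕ Fin K ⊕ Unit)) := by
      rw [Finset.disjoint_singleton_right]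
      intro h
      obtain ⟨k, -, hk⟩ := Finset.mem_biUnion.1 h
      exact FSs_not_mem_U j k hk
    have hIndepT := hindep.indepFun_finset (Finset.univ.biUnion (FSs j))
      {Sum.inr (Sum.inr (Sum.inr ()))} hdisjU hnf
    have hφm : Measurable (fun x : (i : (Finset.univ.biUnion (FSs j) : Finset _)) →
        NoiseCodom K α β γ i => Set.indicator B' (fun _ => (1:ℝ)) x) :=
      measurable_const.indicator hB'meas
    have hψm : Measurable (fun x : (i : ({Sum.inr (Sum.inr (Sum.inr ()))} :
        Finset (Fin K ⊕ Fin K ⊕ Fin K ⊕ Unit))) → NoiseCodom K α β γ i =>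
        (x ⟨Sum.inr (Sum.inr (Sum.inr ())), Finset.mem_singleton_self _⟩ : ℝ)) :=
      measurable_pi_apply _
    have hIndic : IndepFun
        (fun ω => Set.indicator B' (fun _ => (1:ℝ))
          (fun i : (Finset.univ.biUnion (FSs j) : Finset _) => noiseFam W V ξ U i ω)) U P := by
      have hcomp := hIndepT.comp hφm hψm
      exact hcomp
    have hmulfun : Set.indicator (eventEq (Asingle g W V ξ j) a) U
        = (fun ω => Set.indicator B' (fun _ => (1:ℝ))
            (fun i : (Finset.univ.biUnion (FSs j) : Finset _) => noiseFam W V ξ U i ω)) * U := by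
      funext ω
      simp only [Pi.mul_apply]
      by_cases hω : ω ∈ eventEq (Asingle g W V ξ j) a
      · rw [Set.indicator_of_mem hω]
        have hB : (fun i : (Finset.univ.biUnion (FSs j) : Finset _) =>
            noiseFam W V ξ U i ω) ∈ B' := by
          rw [hrep] at hω; exact hω
        rw [Set.indicator_of_mem hB, one_mul]
      · rw [Set.indicator_of_notMem hω]
        have hB : (fun i : (Finset.univ.biUnion (FSs j) : Finset _) =>
            noiseFam W V ξ U i ω) ∉ B' := by
          intro h; exact hω (by rw [hrep]; exact h)
        rw [Set.indicator_of_notMem hB, zero_mul]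
    have hint1 : Integrable (fun ω => Set.indicator B' (fun _ => (1:ℝ))
        (fun i : (Finset.univ.biUnion (FSs j) : Finset _) => noiseFam W V ξ U i ω)) P := by
      have hindfun : (eventEq (Asingle g W V ξ j) a).indicator (fun _ => (1:ℝ))
          = fun ω => Set.indicator B' (fun _ => (1:ℝ))
              (fun i : (Finset.univ.biUnion (FSs j) : Finset _) => noiseFam W V ξ U i ω) := by
        funext ω
        by_cases hω : ω ∈ eventEq (Asingle g W V ξ j) a
        · have hB : (fun i : (Finset.univ.biUnion (FSs j) : Finset _) =>
              noiseFam W V ξ U i ω) ∈ B' := by rw [hrep] at hω; exact hω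
          simp only [Set.indicator_of_mem hω, Set.indicator_of_mem hB]
        · have hB : (fun i : (Finset.univ.biUnion (FSs j) : Finset _) =>
              noiseFam W V ξ U i ω) ∉ B' := by
            intro h; exact hω (by rw [hrep]; exact h)
          simp only [Set.indicator_of_notMem hω, Set.indicator_of_notMem hB]
      rw [← hindfun]
      exact (integrable_indicator_iff hFmeas).2 (integrableOn_const (measure_ne_top _ _))
    have hmul := IndepFun.integral_mul_eq_mul_integral hIndic hint1.aestronglyMeasurable hUint.aestronglyMeasurable
    show ∫ ω, U ω ∂((P (eventEq (Asingle g W V ξ j) a))⁻¹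
        • P.restrict (eventEq (Asingle g W V ξ j) a)) = 0
    rw [integral_smul_measure]
    have hres : ∫ ω in eventEq (Asingle g W V ξ j) a, U ω ∂P = 0 := by
      rw [← integral_indicator hFmeas, hmulfun]
      rw [hmul, hU0, mul_zero]
    rw [hres, smul_zero]
  -- assemble
  haveI hprob : IsProbabilityMeasure (P[|eventEq (Asingle g W V ξ j) a]) :=
    cond_isProbabilityMeasure ha1.ne'
  have hae : ∀ᵐ ω ∂(P[|eventEq (Asingle g W V ξ j) a]), ω ∈ eventEq (Asingle g W V ξ j) a := by
    rw [ae_iff]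
    have h0 : (P[|eventEq (Asingle g W V ξ j) a]) (eventEq (Asingle g W V ξ j) a)ᶜ = 0 := by
      rw [cond_apply hFmeas, Set.inter_compl_self, measure_empty, mul_zero]
    exact h0
  have hUint' : Integrable U (P[|eventEq (Asingle g W V ξ j) a]) := by
    show Integrable U ((P (eventEq (Asingle g W V ξ j) a))⁻¹
      • P.restrict (eventEq (Asingle g W V ξ j) a))
    exact (hUint.restrict).smul_measure (ENNReal.inv_ne_top.2 ha1.ne')
  have hstep1 : ∫ ω, outcome f (Asingle g W V ξ j) W U ω ∂(P[|eventEq (Asingle g W V ξ j) a])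
      = ∫ ω, ((∑ k, f k (a k) (W k ω)) + U ω) ∂(P[|eventEq (Asingle g W V ξ j) a]) := by
    refine integral_congr_ae ?_
    filter_upwards [hae] with ω hω
    unfold outcome
    congr 1
    refine Finset.sum_congr rfl fun k _ => ?_
    have h3 : Asingle g W V ξ j k ω = a k := Set.mem_iInter.1 hω k
    rw [h3]
  rw [hstep1]
  rw [integral_add (integrable_finset_sum _ fun k _ =>
      integrable_comp_finite _ (hW k) (f k (a k))) hUint']
  rw [hUcond, add_zero]
  rw [integral_finset_sum _ fun k _ => integrable_comp_finite _ (hW k) (f k (a k))]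
  refine Eq.trans (Finset.sum_congr rfl fun k _ =>
    integral_comp_finite _ (hW k) (f k (a k))) ?_
  rw [← Finset.add_sum_erase Finset.univ _ (Finset.mem_univ j)]
  congr 1
  · refine Finset.sum_congr rfl fun c _ => ?_
    rw [keyJ c]
  · refine Finset.sum_congr rfl fun k hk => Finset.sum_congr rfl fun c _ => ?_
    rw [keyNe k (Finset.ne_of_mem_erase hk) c]
end

section
/- Fix a subset S ⊆ Fin K and define the mixed-intervention model: Â^S_k := ξ_k if k ∈ S, and Â^S_k := g_k((Â^S_i)_{i<k}, C_k, V_k) if k ∉ S, with outcome Ŷ^S := Σ_k f_k(Â^S_k, C_k) + U. Then for every action profile a : Fin K → α with P({Â^S = a}) > 0 and P({A = a}) > 0: E[Ŷ^S | {Â^S = a}] = Σ_{j ∈ S} Σ_{c : γ} f_j(a_j, c) · P(C_j = c) + Σ_{k ∉ S} Σ_{c : γ} f_k(a_k, c) · P[{C_k = c} | {A = a}]. -/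
open MeasureTheory ProbabilityTheory
open scoped ENNReal

namespace MID

open Finset

variable {Ω α β γ : Type} {K : ℕ}

/-- The block value at index `k`: the triple `(W_k, V_k, ξ_k)`. -/
def bv (W : Fin K → Ω → γ) (V : Fin K → Ω → β) (ξ : Fin K → Ω → α)
    (k : Fin K) (ω : Ω) : γ × β × α := (W k ω, V k ω, ξ k ω)

/-- The per-block predicate characterizing the event `{Â^S = a}`. -/
def Qmix (g : (k : Fin K) → ((i : Fin K) → i < k → α) → γ → β → α)
    (S : Finset (Fin K)) (a : Fin K → α) (k : Fin K) (p : γ × β × α) : Prop :=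
  if k ∈ S then p.2.2 = a k else g k (fun i _ => a i) p.1 p.2.1 = a k

variable {W : Fin K → Ω → γ} {V : Fin K → Ω → β} {ξ : Fin K → Ω → α}

lemma amix_forall_iff (g : (k : Fin K) → ((i : Fin K) → i < k → α) → γ → β → α)
    (S : Finset (Fin K)) (a : Fin K → α) (ω : Ω) :
    (∀ k, Amix g W V ξ S k ω = a k) ↔ ∀ k, Qmix g S a k (bv W V ξ k ω) := by
  constructor
  · intro h k
    unfold Qmix bv
    by_cases hk : k ∈ S
    · have := h k; rw [Amix] at this; simpa [hk] using this
    · have := h k; rw [Amix] at this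
      simp only [hk, if_false] at this ⊢
      have he : (fun i (_ : i < k) => Amix g W V ξ S i ω) = fun i _ => a i := by
        funext i hi; exact h i
      rw [he] at this; exact this
  · intro h
    have main : ∀ n (k : Fin K), (k : ℕ) < n → Amix g W V ξ S k ω = a k := by
      intro n
      induction n with
      | zero => intro k hk; omega
      | succ n ih =>
        intro k hk
        rw [Amix]
        have hq := h k
        unfold Qmix bv at hq
        by_cases hkS : k ∈ S
        · simpa [hkS] using hq
        · simp only [hkS, if_false] at hq ⊢
          have he : (fun i (_ : i < k) => Amix g W V ξ S i ω) = fun i _ => a i := by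
            funext i hi
            exact ih i (lt_of_lt_of_le hi (Nat.lt_succ_iff.mp hk))
          rw [he]; exact hq
    exact fun k => main (k + 1) k (Nat.lt_succ_self _)

lemma aobs_eq_amix (g : (k : Fin K) → ((i : Fin K) → i < k → α) → γ → β → α)
    (ξ : Fin K → Ω → α) (k : Fin K) (ω : Ω) :
    Aobs g W V k ω = Amix g W V ξ (∅ : Finset (Fin K)) k ω := by
  have main : ∀ n (k : Fin K), (k : ℕ) < n →
      Aobs g W V k ω = Amix g W V ξ (∅ : Finset (Fin K)) k ω := by
    intro n
    induction n with
    | zero => intro k hk; omega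
    | succ n ih =>
      intro k hk
      rw [Aobs, Amix]
      simp only [Finset.notMem_empty, if_false]
      congr 1
      funext i hi
      exact ih i (lt_of_lt_of_le hi (Nat.lt_succ_iff.mp hk))
  exact main (k + 1) k (Nat.lt_succ_self _)

lemma eventEq_amix (g : (k : Fin K) → ((i : Fin K) → i < k → α) → γ → β → α)
    (S : Finset (Fin K)) (a : Fin K → α) :
    eventEq (Amix g W V ξ S) a = {ω | ∀ k, Qmix g S a k (bv W V ξ k ω)} := by
  ext ω
  simp only [eventEq, Set.mem_iInter, Set.mem_setOf_eq]
  exact amix_forall_iff g S a ω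

lemma eventEq_aobs (g : (k : Fin K) → ((i : Fin K) → i < k → α) → γ → β → α)
    (ξ : Fin K → Ω → α) (a : Fin K → α) :
    eventEq (Aobs g W V) a
      = {ω | ∀ k, Qmix g (∅ : Finset (Fin K)) a k (bv W V ξ k ω)} := by
  have h1 : eventEq (Aobs g W V) a = eventEq (Amix g W V ξ (∅ : Finset (Fin K))) a := by
    unfold eventEq
    simp only [aobs_eq_amix g ξ]
  rw [h1, eventEq_amix]

end MID
namespace MID

open Finset MeasureTheory ProbabilityTheory

variable {Ω α β γ : Type} {K : ℕ}
variable [MeasurableSpace Ω] {P : Measure Ω} [IsProbabilityMeasure P]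
variable [Fintype α] [MeasurableSpace α] [MeasurableSingletonClass α]
variable [Fintype β] [MeasurableSpace β] [MeasurableSingletonClass β]
variable [Fintype γ] [MeasurableSpace γ] [MeasurableSingletonClass γ]
variable {W : Fin K → Ω → γ} {V : Fin K → Ω → β} {ξ : Fin K → Ω → α} {U : Ω → ℝ}

lemma prob_blocks (hindep : iIndepFun (m := noiseMS K α β γ) (noiseFam W V ξ U) P)
    (t : Fin K → Set γ) (u : Fin K → Set β) (r : Fin K → Set α) :
    P (⋂ k, (W k ⁻¹' t k ∩ (V k ⁻¹' u k ∩ ξ k ⁻¹' r k)))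
      = ∏ k, (P (W k ⁻¹' t k) * (P (V k ⁻¹' u k) * P (ξ k ⁻¹' r k))) := by
  classical
  set s : (Fin K ⊕ Fin K ⊕ Fin K ⊕ Unit) → Set Ω := fun i =>
    match i with
    | .inl k => W k ⁻¹' t k
    | .inr (.inl k) => V k ⁻¹' u k
    | .inr (.inr (.inl k)) => ξ k ⁻¹' r k
    | .inr (.inr (.inr _)) => Set.univ with hs
  have hmeas : ∀ i ∈ (Finset.univ : Finset (Fin K ⊕ Fin K ⊕ Fin K ⊕ Unit)),
      MeasurableSet[(noiseMS K α β γ i).comap (noiseFam W V ξ U i)] (s i) := by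
    rintro (k | k | k | x) -
    · exact ⟨t k, (t k).toFinite.measurableSet, rfl⟩
    · exact ⟨u k, (u k).toFinite.measurableSet, rfl⟩
    · exact ⟨r k, (r k).toFinite.measurableSet, rfl⟩
    · exact ⟨Set.univ, MeasurableSet.univ, by simp [s]⟩
  have h := hindep.meas_biInter (S := Finset.univ) hmeas
  have hset : (⋂ i ∈ (Finset.univ : Finset (Fin K ⊕ Fin K ⊕ Fin K ⊕ Unit)), s i)
      = ⋂ k, (W k ⁻¹' t k ∩ (V k ⁻¹' u k ∩ ξ k ⁻¹' r k)) := by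
    ext ω
    simp only [Set.mem_iInter, Finset.mem_univ, forall_true_left, Set.mem_inter_iff]
    constructor
    · intro hh k
      exact ⟨hh (.inl k), hh (.inr (.inl k)), hh (.inr (.inr (.inl k)))⟩
    · rintro hh (k | k | k | x)
      · exact (hh k).1
      · exact (hh k).2.1
      · exact (hh k).2.2
      · exact Set.mem_univ ω
  have hprod : (∏ i : Fin K ⊕ Fin K ⊕ Fin K ⊕ Unit, P (s i))
      = ∏ k, (P (W k ⁻¹' t k) * (P (V k ⁻¹' u k) * P (ξ k ⁻¹' r k))) := by
    rw [Fintype.prod_sum_type, Fintype.prod_sum_type, Fintype.prod_sum_type]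
    simp only [s, measure_univ, Finset.prod_const_one, mul_one]
    rw [← Finset.prod_mul_distrib, ← Finset.prod_mul_distrib]
  rw [← hset, h]
  exact hprod

lemma prob_block_atom (hindep : iIndepFun (m := noiseMS K α β γ) (noiseFam W V ξ U) P)
    (k₀ : Fin K) (p : γ × β × α) :
    P {ω | bv W V ξ k₀ ω = p}
      = P (W k₀ ⁻¹' {p.1}) * (P (V k₀ ⁻¹' {p.2.1}) * P (ξ k₀ ⁻¹' {p.2.2})) := by
  classical
  have h := prob_blocks hindep (fun k => if k = k₀ then {p.1} else Set.univ)
    (fun k => if k = k₀ then {p.2.1} else Set.univ)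
    (fun k => if k = k₀ then {p.2.2} else Set.univ)
  have hset : (⋂ k, (W k ⁻¹' (if k = k₀ then {p.1} else Set.univ)
      ∩ (V k ⁻¹' (if k = k₀ then {p.2.1} else Set.univ)
        ∩ ξ k ⁻¹' (if k = k₀ then {p.2.2} else Set.univ))))
      = {ω | bv W V ξ k₀ ω = p} := by
    ext ω
    simp only [Set.mem_iInter, Set.mem_inter_iff, Set.mem_preimage, Set.mem_setOf_eq,
      bv, Prod.ext_iff]
    constructor
    · intro hh
      have := hh k₀
      simpa using this
    · intro hh k
      by_cases hk : k = k₀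
      · subst hk; simpa using hh
      · simp [hk]
  have hfac : ∀ k ∈ Finset.univ,
      (P (W k ⁻¹' (if k = k₀ then {p.1} else Set.univ))
        * (P (V k ⁻¹' (if k = k₀ then {p.2.1} else Set.univ))
          * P (ξ k ⁻¹' (if k = k₀ then {p.2.2} else Set.univ))))
      = if k = k₀ then
          P (W k ⁻¹' {p.1}) * (P (V k ⁻¹' {p.2.1}) * P (ξ k ⁻¹' {p.2.2})) else 1 := by
    intro k _
    by_cases hk : k = k₀ <;> simp [hk, measure_univ]
  rw [hset] at h
  rw [h, Finset.prod_congr rfl hfac, Finset.prod_ite_eq' Finset.univ k₀]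
  simp

lemma prob_W_inter_xi (hindep : iIndepFun (m := noiseMS K α β γ) (noiseFam W V ξ U) P)
    (j : Fin K) (c : γ) (x : α) :
    P {ω | W j ω = c ∧ ξ j ω = x} = P (W j ⁻¹' {c}) * P (ξ j ⁻¹' {x}) := by
  classical
  have h := prob_blocks hindep (fun k => if k = j then {c} else Set.univ)
    (fun _ => Set.univ) (fun k => if k = j then {x} else Set.univ)
  have hset : (⋂ k, (W k ⁻¹' (if k = j then {c} else Set.univ)
      ∩ (V k ⁻¹' Set.univ ∩ ξ k ⁻¹' (if k = j then {x} else Set.univ))))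
      = {ω | W j ω = c ∧ ξ j ω = x} := by
    ext ω
    simp only [Set.mem_iInter, Set.mem_inter_iff, Set.mem_preimage, Set.mem_setOf_eq]
    constructor
    · intro hh
      have h1 := hh j
      simp only [if_pos rfl, Set.mem_preimage, Set.mem_singleton_iff, Set.mem_univ,
        true_and] at h1
      exact ⟨h1.1, h1.2⟩
    · intro hh k
      by_cases hk : k = j
      · subst hk; simpa using hh
      · simp [hk]
  have hfac : ∀ k ∈ Finset.univ,
      (P (W k ⁻¹' (if k = j then {c} else Set.univ))
        * (P (V k ⁻¹' Set.univ)
          * P (ξ k ⁻¹' (if k = j then {x} else Set.univ))))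
      = if k = j then P (W k ⁻¹' {c}) * P (ξ k ⁻¹' {x}) else 1 := by
    intro k _
    by_cases hk : k = j <;> simp [hk, measure_univ]
  rw [hset] at h
  rw [h, Finset.prod_congr rfl hfac, Finset.prod_ite_eq' Finset.univ j]
  simp

end MID
set_option linter.unusedSectionVars false
set_option linter.unusedVariables false

namespace MID

open Finset MeasureTheory ProbabilityTheory

variable {Ω α β γ : Type} {K : ℕ}
variable [MeasurableSpace Ω] {P : Measure Ω} [IsProbabilityMeasure P]
variable [Fintype α] [MeasurableSpace α] [MeasurableSingletonClass α]
variable [Fintype β] [MeasurableSpace β] [MeasurableSingletonClass β]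
variable [Fintype γ] [MeasurableSpace γ] [MeasurableSingletonClass γ]
variable {W : Fin K → Ω → γ} {V : Fin K → Ω → β} {ξ : Fin K → Ω → α} {U : Ω → ℝ}

lemma bv_measurable (hW : ∀ k, Measurable (W k)) (hV : ∀ k, Measurable (V k))
    (hξ : ∀ k, Measurable (ξ k)) (k : Fin K) : Measurable (bv W V ξ k) :=
  (hW k).prodMk ((hV k).prodMk (hξ k))

lemma bv_set_measurable (hW : ∀ k, Measurable (W k)) (hV : ∀ k, Measurable (V k))
    (hξ : ∀ k, Measurable (ξ k)) (k : Fin K) (R : γ × β × α → Prop) :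
    MeasurableSet {ω | R (bv W V ξ k ω)} := by
  have : {ω | R (bv W V ξ k ω)} = bv W V ξ k ⁻¹' {p | R p} := rfl
  rw [this]
  exact bv_measurable hW hV hξ k ({p | R p}.toFinite.measurableSet)

lemma prob_block_pred (hindep : iIndepFun (m := noiseMS K α β γ) (noiseFam W V ξ U) P)
    (hW : ∀ k, Measurable (W k)) (hV : ∀ k, Measurable (V k))
    (hξ : ∀ k, Measurable (ξ k)) (k₀ : Fin K) (R : γ × β × α → Prop)
    [DecidablePred R] :
    P {ω | R (bv W V ξ k₀ ω)}
      = ∑ p ∈ Finset.univ.filter R, P {ω | bv W V ξ k₀ ω = p} := by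
  classical
  have hset : {ω | R (bv W V ξ k₀ ω)}
      = ⋃ p ∈ Finset.univ.filter R, {ω | bv W V ξ k₀ ω = p} := by
    ext ω
    simp only [Set.mem_setOf_eq, Set.mem_iUnion, Finset.mem_filter, Finset.mem_univ,
      true_and, exists_prop]
    constructor
    · intro hR; exact ⟨bv W V ξ k₀ ω, hR, rfl⟩
    · rintro ⟨p, hp, rfl⟩; exact hp
  rw [hset]
  refine measure_biUnion_finset ?_ ?_
  · intro p _ p' _ hne
    refine Set.disjoint_left.mpr fun ω h1 h2 => hne ?_
    rw [← h1, ← h2]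
  · intro p _
    exact bv_set_measurable hW hV hξ k₀ (· = p)

lemma prob_forall_blocks (hindep : iIndepFun (m := noiseMS K α β γ) (noiseFam W V ξ U) P)
    (hW : ∀ k, Measurable (W k)) (hV : ∀ k, Measurable (V k))
    (hξ : ∀ k, Measurable (ξ k)) (Q : ∀ _ : Fin K, γ × β × α → Prop) :
    P {ω | ∀ k, Q k (bv W V ξ k ω)} = ∏ k, P {ω | Q k (bv W V ξ k ω)} := by
  classical
  have hset : {ω | ∀ k, Q k (bv W V ξ k ω)}
      = ⋃ h ∈ Fintype.piFinset (fun k => Finset.univ.filter (Q k)),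
          {ω | ∀ k, bv W V ξ k ω = h k} := by
    ext ω
    simp only [Set.mem_setOf_eq, Set.mem_iUnion, exists_prop,
      Fintype.mem_piFinset, Finset.mem_filter, Finset.mem_univ, true_and]
    constructor
    · intro hQ
      exact ⟨fun k => bv W V ξ k ω, hQ, fun k => rfl⟩
    · rintro ⟨h, hh, he⟩ k
      rw [he k]; exact hh k
  have hatom : ∀ h : Fin K → γ × β × α,
      P {ω | ∀ k, bv W V ξ k ω = h k}
        = ∏ k, P {ω | bv W V ξ k ω = h k} := by
    intro h
    have h1 := prob_blocks hindep (fun k => {(h k).1}) (fun k => {(h k).2.1})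
      (fun k => {(h k).2.2})
    have hs2 : (⋂ k, (W k ⁻¹' {(h k).1} ∩ (V k ⁻¹' {(h k).2.1} ∩ ξ k ⁻¹' {(h k).2.2})))
        = {ω | ∀ k, bv W V ξ k ω = h k} := by
      ext ω
      simp only [Set.mem_iInter, Set.mem_inter_iff, Set.mem_preimage,
        Set.mem_singleton_iff, Set.mem_setOf_eq, bv, Prod.ext_iff]
    rw [hs2] at h1
    rw [h1]
    exact Finset.prod_congr rfl fun k _ => (prob_block_atom hindep k (h k)).symm
  have step1 : P {ω | ∀ k, Q k (bv W V ξ k ω)}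
      = ∑ h ∈ Fintype.piFinset (fun k => Finset.univ.filter (Q k)),
          P {ω | ∀ k, bv W V ξ k ω = h k} := by
    rw [hset]
    refine measure_biUnion_finset ?_ ?_
    · intro h1 _ h2 _ hne
      refine Set.disjoint_left.mpr fun ω hh1 hh2 => hne (funext fun k => ?_)
      rw [← hh1 k, ← hh2 k]
    · intro h _
      have : {ω | ∀ k, bv W V ξ k ω = h k} = ⋂ k, {ω | bv W V ξ k ω = h k} := by
        ext ω; simp [Set.mem_iInter]
      rw [this]
      exact MeasurableSet.iInter fun k => bv_set_measurable hW hV hξ k (· = h k)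
  have step2 := Finset.prod_univ_sum (fun k => Finset.univ.filter (Q k))
    (fun k p => P {ω | bv W V ξ k ω = p})
  rw [step1, Finset.sum_congr rfl fun h _ => hatom h, ← step2]
  exact Finset.prod_congr rfl fun k _ => (prob_block_pred hindep hW hV hξ k (Q k)).symm

lemma prob_forall_split (hindep : iIndepFun (m := noiseMS K α β γ) (noiseFam W V ξ U) P)
    (hW : ∀ k, Measurable (W k)) (hV : ∀ k, Measurable (V k))
    (hξ : ∀ k, Measurable (ξ k)) (Q : ∀ _ : Fin K, γ × β × α → Prop) (k₀ : Fin K) :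
    P {ω | ∀ k, Q k (bv W V ξ k ω)}
      = P {ω | Q k₀ (bv W V ξ k₀ ω)}
        * ∏ k ∈ Finset.univ.erase k₀, P {ω | Q k (bv W V ξ k ω)} := by
  classical
  rw [prob_forall_blocks hindep hW hV hξ Q]
  exact (Finset.mul_prod_erase Finset.univ _ (Finset.mem_univ k₀)).symm

lemma prob_forall_inter_W (hindep : iIndepFun (m := noiseMS K α β γ) (noiseFam W V ξ U) P)
    (hW : ∀ k, Measurable (W k)) (hV : ∀ k, Measurable (V k))
    (hξ : ∀ k, Measurable (ξ k)) (Q : ∀ _ : Fin K, γ × β × α → Prop)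
    (k₀ : Fin K) (c : γ) :
    P ({ω | ∀ k, Q k (bv W V ξ k ω)} ∩ {ω | W k₀ ω = c})
      = P {ω | Q k₀ (bv W V ξ k₀ ω) ∧ W k₀ ω = c}
        * ∏ k ∈ Finset.univ.erase k₀, P {ω | Q k (bv W V ξ k ω)} := by
  classical
  set Q' : ∀ _ : Fin K, γ × β × α → Prop :=
    fun k p => Q k p ∧ (k = k₀ → p.1 = c) with hQ'
  have hset : {ω | ∀ k, Q k (bv W V ξ k ω)} ∩ {ω | W k₀ ω = c}
      = {ω | ∀ k, Q' k (bv W V ξ k ω)} := by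
    ext ω
    simp only [Set.mem_inter_iff, Set.mem_setOf_eq, hQ']
    constructor
    · rintro ⟨h1, h2⟩ k
      exact ⟨h1 k, fun hk => by subst hk; exact h2⟩
    · intro hh
      exact ⟨fun k => (hh k).1, (hh k₀).2 rfl⟩
  rw [hset, prob_forall_split hindep hW hV hξ Q' k₀]
  congr 1
  · congr 1
    ext ω
    simp [hQ', bv]
  · refine Finset.prod_congr rfl fun k hk => ?_
    have hkne : k ≠ k₀ := Finset.ne_of_mem_erase hk
    congr 1
    ext ω
    simp [hQ', hkne]

end MID
namespace MID

open Finset MeasureTheory ProbabilityTheory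

variable {Ω α β γ : Type} {K : ℕ}
variable [MeasurableSpace Ω] {P : Measure Ω} [IsProbabilityMeasure P]
variable [Fintype α] [MeasurableSpace α] [MeasurableSingletonClass α]
variable [Fintype β] [MeasurableSpace β] [MeasurableSingletonClass β]
variable [Fintype γ] [MeasurableSpace γ] [MeasurableSingletonClass γ]
variable {W : Fin K → Ω → γ} {V : Fin K → Ω → β} {ξ : Fin K → Ω → α} {U : Ω → ℝ}

lemma pi_set_measurable (sE : Set (Fin K → γ × β × α)) : MeasurableSet sE := by
  have hsing : ∀ h : Fin K → γ × β × α, MeasurableSet {h} := by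
    intro h
    have : ({h} : Set (Fin K → γ × β × α)) = ⋂ k, (fun x => x k) ⁻¹' {h k} := by
      ext x
      simp [funext_iff]
    rw [this]
    exact MeasurableSet.iInter fun k =>
      (measurable_pi_apply k) (measurableSet_singleton (h k))
  have : sE = ⋃ h ∈ sE, {h} := by simp
  rw [this]
  exact MeasurableSet.biUnion sE.toFinite.countable fun h _ => hsing h

lemma integral_U_on_block_event
    (hindep : iIndepFun (m := noiseMS K α β γ) (noiseFam W V ξ U) P)
    (hW : ∀ k, Measurable (W k)) (hV : ∀ k, Measurable (V k))
    (hξ : ∀ k, Measurable (ξ k)) (hU : Measurable U)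
    (hU0 : ∫ ω, U ω ∂P = 0)
    (sE : Set (Fin K → γ × β × α)) :
    ∫ ω in {ω | (fun k => bv W V ξ k ω) ∈ sE}, U ω ∂P = 0 := by
  classical
  letI : (i : Fin K ⊕ Fin K ⊕ Fin K ⊕ Unit) → MeasurableSpace (NoiseCodom K α β γ i) :=
    noiseMS K α β γ
  set T : Ω → (Fin K → γ × β × α) := fun ω k => bv W V ξ k ω with hT
  have hsE : MeasurableSet sE := pi_set_measurable sE
  have hTmeas : Measurable T :=
    measurable_pi_lambda _ fun k => bv_measurable hW hV hξ k
  set uidx : Fin K ⊕ Fin K ⊕ Fin K ⊕ Unit := Sum.inr (Sum.inr (Sum.inr ())) with huidx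
  have hdisj : Disjoint ((Finset.univ : Finset (Fin K ⊕ Fin K ⊕ Fin K ⊕ Unit)).erase uidx)
      {uidx} :=
    Finset.disjoint_singleton_right.mpr (Finset.notMem_erase _ _)
  have hmeasAll : ∀ i, Measurable (noiseFam W V ξ U i) := by
    rintro (k | k | k | x)
    · exact hW k
    · exact hV k
    · exact hξ k
    · exact hU
  have hIF := hindep.indepFun_finset (Finset.univ.erase uidx) {uidx} hdisj hmeasAll
  set φ : ((i : ((Finset.univ : Finset (Fin K ⊕ Fin K ⊕ Fin K ⊕ Unit)).erase uidx))
        → NoiseCodom K α β γ i) → (Fin K → γ × β × α) :=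
    fun x k => (x ⟨Sum.inl k, by simp [huidx]⟩,
      x ⟨Sum.inr (Sum.inl k), by simp [huidx]⟩,
      x ⟨Sum.inr (Sum.inr (Sum.inl k)), by simp [huidx]⟩) with hφdef
  have hφ : Measurable φ :=
    measurable_pi_lambda _ fun k =>
      Measurable.prodMk (measurable_pi_apply _)
        (Measurable.prodMk (measurable_pi_apply _) (measurable_pi_apply _))
  set ψ : ((i : ({uidx} : Finset (Fin K ⊕ Fin K ⊕ Fin K ⊕ Unit))) → NoiseCodom K α β γ i) → ℝ :=
    fun x => x ⟨uidx, by simp⟩ with hψdef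
  have hψ : Measurable ψ := measurable_pi_apply _
  have hTU : IndepFun T U P := by
    have hc := hIF.comp hφ hψ
    exact hc
  set X : Ω → ℝ := fun ω => Set.indicator sE (fun _ => (1 : ℝ)) (T ω) with hX
  have hXmeas : Measurable X := (measurable_const.indicator hsE).comp hTmeas
  have hXU : IndepFun X U P := hTU.comp (measurable_const.indicator hsE) measurable_id
  have hmul : (fun ω => X ω * U ω) = (X * U) := rfl
  have key : ∫ ω, X ω * U ω ∂P = (∫ ω, X ω ∂P) * ∫ ω, U ω ∂P := by
    rw [hmul]
    exact hXU.integral_mul_eq_mul_integral hXmeas.aestronglyMeasurable hU.aestronglyMeasurable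
  have hpre : {ω | (fun k => bv W V ξ k ω) ∈ sE} = T ⁻¹' sE := rfl
  have hind : Set.indicator (T ⁻¹' sE) U = fun ω => X ω * U ω := by
    funext ω
    by_cases h : T ω ∈ sE <;> simp [hX, Set.indicator_apply, h]
  rw [hpre, ← integral_indicator (hTmeas hsE), hind, key, hU0, mul_zero]

end MID

set_option maxHeartbeats 1000000 in
/-- Decomposition of the mixed-interventional conditional expectation for a subset `S`:
`E[Ŷ^S | Â^S = a] = Σ_{j∈S} Σ_c f_j(a_j,c)·P(C_j = c)
  + Σ_{k∉S} Σ_c f_k(a_k,c)·P(C_k = c | A = a)`. -/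
theorem mixed_intervention_decomposition
    {Ω : Type} [MeasurableSpace Ω] (P : MeasureTheory.Measure Ω) [MeasureTheory.IsProbabilityMeasure P]
    {K : ℕ} (hK : 1 ≤ K)
    {α β γ : Type} [Fintype α] [Nonempty α] [MeasurableSpace α] [MeasurableSingletonClass α]
    [Fintype β] [Nonempty β] [MeasurableSpace β] [MeasurableSingletonClass β]
    [Fintype γ] [Nonempty γ] [MeasurableSpace γ] [MeasurableSingletonClass γ]
    (W : Fin K → Ω → γ) (V : Fin K → Ω → β) (ξ : Fin K → Ω → α) (U : Ω → ℝ)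
    (hW : ∀ k, Measurable (W k)) (hV : ∀ k, Measurable (V k))
    (hξ : ∀ k, Measurable (ξ k)) (hU : Measurable U)
    (hindep : iIndepFun (m := noiseMS K α β γ) (noiseFam W V ξ U) P)
    (hUint : MeasureTheory.Integrable U P) (hU0 : ∫ ω, U ω ∂P = 0)
    (g : (k : Fin K) → ((i : Fin K) → i < k → α) → γ → β → α)
    (f : Fin K → α → γ → ℝ)
    (S : Finset (Fin K)) (a : Fin K → α)
    (ha1 : 0 < P (eventEq (Amix g W V ξ S) a))
    (ha2 : 0 < P (eventEq (Aobs g W V) a)) :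
    ∫ ω, outcome f (Amix g W V ξ S) W U ω ∂(P[|eventEq (Amix g W V ξ S) a])
      = (∑ j ∈ S, ∑ c : γ, f j (a j) c * (P {ω | W j ω = c}).toReal)
        + ∑ k ∈ Sᶜ, ∑ c : γ,
            f k (a k) c * ((P[|eventEq (Aobs g W V) a]) {ω | W k ω = c}).toReal := by
  classical
  set Qm := MID.Qmix g S a with hQm
  set Qo := MID.Qmix g (∅ : Finset (Fin K)) a with hQo
  have hEm' : eventEq (Amix g W V ξ S) a = {ω | ∀ k, Qm k (MID.bv W V ξ k ω)} :=
    MID.eventEq_amix g S a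
  have hEo' : eventEq (Aobs g W V) a = {ω | ∀ k, Qo k (MID.bv W V ξ k ω)} :=
    MID.eventEq_aobs g ξ a
  have hWset : ∀ (k : Fin K) (c : γ), MeasurableSet {ω | W k ω = c} := fun k c =>
    (hW k) (measurableSet_singleton c)
  have hforallmeas : ∀ Q : ∀ _ : Fin K, γ × β × α → Prop,
      MeasurableSet {ω | ∀ k, Q k (MID.bv W V ξ k ω)} := by
    intro Q
    have h : {ω | ∀ k, Q k (MID.bv W V ξ k ω)} = ⋂ k, {ω | Q k (MID.bv W V ξ k ω)} := by
      ext ω; simp [Set.mem_iInter]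
    rw [h]
    exact MeasurableSet.iInter fun k => MID.bv_set_measurable hW hV hξ k (Q k)
  have hEmmeas : MeasurableSet (eventEq (Amix g W V ξ S) a) := by
    rw [hEm']; exact hforallmeas Qm
  have hEomeas : MeasurableSet (eventEq (Aobs g W V) a) := by
    rw [hEo']; exact hforallmeas Qo
  have hPEm0 : P (eventEq (Amix g W V ξ S) a) ≠ 0 := ha1.ne'
  have hPEo0 : P (eventEq (Aobs g W V) a) ≠ 0 := ha2.ne'
  -- (a) intervened coordinates
  have hjS : ∀ j ∈ S, ∀ c : γ,
      (P[|eventEq (Amix g W V ξ S) a]) {ω | W j ω = c} = P {ω | W j ω = c} := by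
    intro j hj c
    have h1 : P (eventEq (Amix g W V ξ S) a ∩ {ω | W j ω = c})
        = P {ω | Qm j (MID.bv W V ξ j ω) ∧ W j ω = c}
          * ∏ k ∈ Finset.univ.erase j, P {ω | Qm k (MID.bv W V ξ k ω)} := by
      rw [hEm']; exact MID.prob_forall_inter_W hindep hW hV hξ Qm j c
    have h2 : P (eventEq (Amix g W V ξ S) a)
        = P {ω | Qm j (MID.bv W V ξ j ω)}
          * ∏ k ∈ Finset.univ.erase j, P {ω | Qm k (MID.bv W V ξ k ω)} := by
      rw [hEm']; exact MID.prob_forall_split hindep hW hV hξ Qm j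
    have hfa : {ω | Qm j (MID.bv W V ξ j ω) ∧ W j ω = c}
        = {ω | W j ω = c ∧ ξ j ω = a j} := by
      ext ω; simp [hQm, MID.Qmix, hj, MID.bv, and_comm]
    have hfb : {ω | Qm j (MID.bv W V ξ j ω)} = {ω | ξ j ω = a j} := by
      ext ω; simp [hQm, MID.Qmix, hj, MID.bv]
    have hWξ := MID.prob_W_inter_xi hindep j c (a j)
    have hxi : (ξ j ⁻¹' {a j} : Set Ω) = {ω | ξ j ω = a j} := rfl
    have hwc : (W j ⁻¹' {c} : Set Ω) = {ω | W j ω = c} := rfl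
    have hkey : P (eventEq (Amix g W V ξ S) a ∩ {ω | W j ω = c})
        = P {ω | W j ω = c} * P (eventEq (Amix g W V ξ S) a) := by
      rw [h1, hfa, hWξ, h2, hfb, hxi, hwc]; ring
    rw [ProbabilityTheory.cond_apply hEmmeas, hkey, mul_comm (P {ω | W j ω = c}),
      ← mul_assoc, ENNReal.inv_mul_cancel hPEm0 (measure_ne_top P _), one_mul]
  -- (b) non-intervened coordinates
  have hkSc : ∀ k, k ∉ S → ∀ c : γ,
      (P[|eventEq (Amix g W V ξ S) a]) {ω | W k ω = c}
        = (P[|eventEq (Aobs g W V) a]) {ω | W k ω = c} := by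
    intro k hk c
    have hQoQm1 : {ω | Qo k (MID.bv W V ξ k ω)} = {ω | Qm k (MID.bv W V ξ k ω)} := by
      ext ω; simp [hQm, hQo, MID.Qmix, hk]
    have hQoQm2 : {ω | Qo k (MID.bv W V ξ k ω) ∧ W k ω = c}
        = {ω | Qm k (MID.bv W V ξ k ω) ∧ W k ω = c} := by
      ext ω; simp [hQm, hQo, MID.Qmix, hk]
    set X := P {ω | Qm k (MID.bv W V ξ k ω) ∧ W k ω = c} with hX
    set Y := P {ω | Qm k (MID.bv W V ξ k ω)} with hY
    set M := ∏ i ∈ Finset.univ.erase k, P {ω | Qm i (MID.bv W V ξ i ω)} with hM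
    set O := ∏ i ∈ Finset.univ.erase k, P {ω | Qo i (MID.bv W V ξ i ω)} with hO
    have h1m : P (eventEq (Amix g W V ξ S) a ∩ {ω | W k ω = c}) = X * M := by
      rw [hEm']; exact MID.prob_forall_inter_W hindep hW hV hξ Qm k c
    have h2m : P (eventEq (Amix g W V ξ S) a) = Y * M := by
      rw [hEm']; exact MID.prob_forall_split hindep hW hV hξ Qm k
    have h1o : P (eventEq (Aobs g W V) a ∩ {ω | W k ω = c}) = X * O := by
      rw [hEo', MID.prob_forall_inter_W hindep hW hV hξ Qo k c, hQoQm2]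
    have h2o : P (eventEq (Aobs g W V) a) = Y * O := by
      rw [hEo', MID.prob_forall_split hindep hW hV hξ Qo k, hQoQm1]
    have hY0 : Y ≠ 0 := fun h0 => hPEm0 (by rw [h2m, h0, zero_mul])
    have hYt : Y ≠ ⊤ := measure_ne_top P _
    have hM0 : M ≠ 0 := fun h0 => hPEm0 (by rw [h2m, h0, mul_zero])
    have hO0 : O ≠ 0 := fun h0 => hPEo0 (by rw [h2o, h0, mul_zero])
    have hMt : M ≠ ⊤ := by
      rw [hM]
      exact (ENNReal.prod_lt_top fun i _ => measure_lt_top P _).ne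
    have hOt : O ≠ ⊤ := by
      rw [hO]
      exact (ENNReal.prod_lt_top fun i _ => measure_lt_top P _).ne
    have cancel : ∀ m : ℝ≥0∞, m ≠ 0 → m ≠ ⊤ → (Y * m)⁻¹ * (X * m) = Y⁻¹ * X := by
      intro m hm0 hmt
      rw [ENNReal.mul_inv (Or.inl hY0) (Or.inl hYt)]
      calc Y⁻¹ * m⁻¹ * (X * m) = (Y⁻¹ * X) * (m⁻¹ * m) := by ring
        _ = Y⁻¹ * X := by rw [ENNReal.inv_mul_cancel hm0 hmt, mul_one]
    rw [ProbabilityTheory.cond_apply hEmmeas, ProbabilityTheory.cond_apply hEomeas,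
      h1m, h2m, h1o, h2o, cancel M hM0 hMt, cancel O hO0 hOt]
  -- integral computation
  have hUzero : ∫ ω in eventEq (Amix g W V ξ S) a, U ω ∂P = 0 := by
    have h : eventEq (Amix g W V ξ S) a
        = {ω | (fun k => MID.bv W V ξ k ω) ∈ {h : Fin K → γ × β × α | ∀ k, Qm k (h k)}} := by
      rw [hEm']; rfl
    rw [h]
    exact MID.integral_U_on_block_event hindep hW hV hξ hU hU0 _
  have hWset' : ∀ (k : Fin K) (c : γ), MeasurableSet (W k ⁻¹' {c}) := fun k c =>
    (hW k) (measurableSet_singleton c)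
  have hintInd : ∀ (k : Fin K) (c : γ),
      MeasureTheory.Integrable (Set.indicator (W k ⁻¹' {c}) fun _ => f k (a k) c)
        (P.restrict (eventEq (Amix g W V ξ S) a)) := fun k c =>
    ((MeasureTheory.integrable_const _).indicator (hWset' k c)).restrict
  have hcong : Set.EqOn (outcome f (Amix g W V ξ S) W U)
      (fun ω => (∑ k, ∑ c : γ, Set.indicator (W k ⁻¹' {c}) (fun _ => f k (a k) c) ω) + U ω)
      (eventEq (Amix g W V ξ S) a) := by
    intro ω hω
    have hA : ∀ k, Amix g W V ξ S k ω = a k := fun k => Set.mem_iInter.mp hω k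
    unfold outcome
    congr 1
    calc (∑ k, f k (Amix g W V ξ S k ω) (W k ω)) = ∑ k, f k (a k) (W k ω) :=
        Finset.sum_congr rfl fun k _ => by rw [hA k]
      _ = ∑ k, ∑ c : γ, Set.indicator (W k ⁻¹' {c}) (fun _ => f k (a k) c) ω := by
        refine Finset.sum_congr rfl fun k _ => Eq.symm ?_
        calc ∑ c : γ, Set.indicator (W k ⁻¹' {c}) (fun _ => f k (a k) c) ω
            = ∑ c : γ, if W k ω = c then f k (a k) c else 0 :=
              Finset.sum_congr rfl fun c _ => by simp [Set.indicator_apply]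
          _ = f k (a k) (W k ω) := by rw [Finset.sum_ite_eq]; simp
  have hrepr : ∫ ω, outcome f (Amix g W V ξ S) W U ω ∂(P[|eventEq (Amix g W V ξ S) a])
      = (P (eventEq (Amix g W V ξ S) a)).toReal⁻¹
        * ∑ k, ∑ c : γ,
            (P ((W k ⁻¹' {c}) ∩ eventEq (Amix g W V ξ S) a)).toReal * f k (a k) c := by
    have hcondrw : (P[|eventEq (Amix g W V ξ S) a])
        = (P (eventEq (Amix g W V ξ S) a))⁻¹ • P.restrict (eventEq (Amix g W V ξ S) a) := rfl
    rw [hcondrw, MeasureTheory.integral_smul_measure,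
      MeasureTheory.setIntegral_congr_fun hEmmeas hcong,
      MeasureTheory.integral_add
        (MeasureTheory.integrable_finset_sum _ fun k _ =>
          MeasureTheory.integrable_finset_sum _ fun c _ => hintInd k c)
        hUint.restrict,
      hUzero, add_zero,
      MeasureTheory.integral_finset_sum _ (fun k _ =>
        MeasureTheory.integrable_finset_sum _ fun c _ => hintInd k c)]
    rw [ENNReal.toReal_inv, smul_eq_mul]
    congr 1
    refine Finset.sum_congr rfl fun k _ => ?_
    rw [MeasureTheory.integral_finset_sum _ (fun c _ => hintInd k c)]
    refine Finset.sum_congr rfl fun c _ => ?_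
    rw [MeasureTheory.integral_indicator_const (f k (a k) c) (hWset' k c),
      MeasureTheory.measureReal_restrict_apply (hWset' k c), smul_eq_mul,
      MeasureTheory.measureReal_def]
  rw [hrepr]
  have hterm : ∀ (k : Fin K) (c : γ),
      (P (eventEq (Amix g W V ξ S) a)).toReal⁻¹
          * ((P ((W k ⁻¹' {c}) ∩ eventEq (Amix g W V ξ S) a)).toReal * f k (a k) c)
        = f k (a k) c * ((P[|eventEq (Amix g W V ξ S) a]) {ω | W k ω = c}).toReal := by
    intro k c
    rw [ProbabilityTheory.cond_apply hEmmeas,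
      Set.inter_comm (eventEq (Amix g W V ξ S) a) {ω | W k ω = c},
      ENNReal.toReal_mul, ENNReal.toReal_inv]
    have h : (W k ⁻¹' {c}) = {ω | W k ω = c} := rfl
    rw [h]
    ring
  have hstep : (∑ k : Fin K, ∑ c : γ,
      (P (eventEq (Amix g W V ξ S) a)).toReal⁻¹
        * ((P (W k ⁻¹' {c} ∩ eventEq (Amix g W V ξ S) a)).toReal * f k (a k) c))
      = ∑ k : Fin K, ∑ c : γ,
        f k (a k) c * ((P[|eventEq (Amix g W V ξ S) a]) {ω | W k ω = c}).toReal :=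
    Finset.sum_congr rfl fun k _ => Finset.sum_congr rfl fun c _ => hterm k c
  rw [Finset.mul_sum]
  simp_rw [Finset.mul_sum]
  rw [hstep, ← Finset.sum_add_sum_compl S
      (fun k => ∑ c : γ,
        f k (a k) c * ((P[|eventEq (Amix g W V ξ S) a]) {ω | W k ω = c}).toReal)]
  congr 1
  · exact Finset.sum_congr rfl fun j hj =>
      Finset.sum_congr rfl fun c _ => by rw [hjS j hj c]
  · exact Finset.sum_congr rfl fun k hk =>
      Finset.sum_congr rfl fun c _ => by rw [hkSc k (Finset.mem_compl.mp hk) c]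
end

section
/- Let j, k be indices with j < k. For every c : γ and every partial action profile a_0, …, a_k : α such that the events ⋂_{i ≤ k} {Ã^j_i = a_i} and ⋂_{i ≤ k} {A_i = a_i} both have positive probability: P[{C_k = c} | ⋂_{i ≤ k} {Ã^j_i = a_i}] = P[{C_k = c} | ⋂_{i ≤ k} {A_i = a_i}]. That is, the conditional distribution of the confounder C_k given the first k+1 actions is the same in the single-intervention model do(A_j) as in the observational model. -/
open MeasureTheory ProbabilityTheory
open scoped ENNReal

/-! ### Auxiliary definitions and lemmas for the proof -/

/-- Deterministic version of the observational recursion. -/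
def Adet {α β γ : Type} {K : ℕ}
    (g : (k : Fin K) → ((i : Fin K) → i < k → α) → γ → β → α)
    (w : Fin K → γ) (v : Fin K → β) (k : Fin K) : α :=
  g k (fun i _ => Adet g w v i) (w k) (v k)
termination_by k.1
decreasing_by exact ‹_ < k›

/-- Deterministic version of the single-intervention recursion. -/
def AdetS {α β γ : Type} {K : ℕ}
    (g : (k : Fin K) → ((i : Fin K) → i < k → α) → γ → β → α)
    (w : Fin K → γ) (v : Fin K → β) (x : α) (j k : Fin K) : α :=
  if k = j then x
  else g k (fun i _ => AdetS g w v x j i) (w k) (v k)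
termination_by k.1
decreasing_by exact ‹_ < k›

lemma Aobs_eq_Adet {Ω α β γ : Type} {K : ℕ}
    (g : (k : Fin K) → ((i : Fin K) → i < k → α) → γ → β → α)
    (W : Fin K → Ω → γ) (V : Fin K → Ω → β) (k : Fin K) (ω : Ω) :
    Aobs g W V k ω = Adet g (fun i => W i ω) (fun i => V i ω) k := by
  rw [Aobs, Adet]
  have h1 : (fun i (_ : i < k) => Aobs g W V i ω)
      = (fun i (_ : i < k) => Adet g (fun i => W i ω) (fun i => V i ω) i) := by
    funext i h
    exact Aobs_eq_Adet g W V i ω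
  rw [h1]
termination_by k.1
decreasing_by exact h

lemma Asingle_eq_AdetS {Ω α β γ : Type} {K : ℕ}
    (g : (k : Fin K) → ((i : Fin K) → i < k → α) → γ → β → α)
    (W : Fin K → Ω → γ) (V : Fin K → Ω → β) (ξ : Fin K → Ω → α) (j k : Fin K) (ω : Ω) :
    Asingle g W V ξ j k ω
      = AdetS g (fun i => W i ω) (fun i => V i ω) (ξ j ω) j k := by
  rw [Asingle, AdetS]
  by_cases h : k = j
  · rw [if_pos h, if_pos h]
  · rw [if_neg h, if_neg h]
    have h1 : (fun i (_ : i < k) => Asingle g W V ξ j i ω)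
        = (fun i (_ : i < k) => AdetS g (fun i => W i ω) (fun i => V i ω) (ξ j ω) j i) := by
      funext i hi
      exact Asingle_eq_AdetS g W V ξ j i ω
    rw [h1]
termination_by k.1
decreasing_by exact hi

lemma Adet_congr {α β γ : Type} {K : ℕ}
    (g : (k : Fin K) → ((i : Fin K) → i < k → α) → γ → β → α)
    (w w' : Fin K → γ) (v v' : Fin K → β) (k : Fin K)
    (hw : ∀ i, i ≤ k → w i = w' i) (hv : ∀ i, i ≤ k → v i = v' i) :
    Adet g w v k = Adet g w' v' k := by
  rw [Adet, Adet]
  have h1 : (fun i (_ : i < k) => Adet g w v i)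
      = (fun i (_ : i < k) => Adet g w' v' i) := by
    funext i h
    exact Adet_congr g w w' v v' i (fun i' hi' => hw i' (hi'.trans h.le))
      (fun i' hi' => hv i' (hi'.trans h.le))
  rw [h1, hw k le_rfl, hv k le_rfl]
termination_by k.1
decreasing_by exact h

lemma AdetS_congr {α β γ : Type} {K : ℕ}
    (g : (k : Fin K) → ((i : Fin K) → i < k → α) → γ → β → α)
    (w w' : Fin K → γ) (v v' : Fin K → β) (x : α) (j k : Fin K)
    (hw : ∀ i, i ≤ k → w i = w' i) (hv : ∀ i, i ≤ k → v i = v' i) :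
    AdetS g w v x j k = AdetS g w' v' x j k := by
  rw [AdetS, AdetS]
  by_cases h : k = j
  · rw [if_pos h, if_pos h]
  · rw [if_neg h, if_neg h]
    have h1 : (fun i (_ : i < k) => AdetS g w v x j i)
        = (fun i (_ : i < k) => AdetS g w' v' x j i) := by
      funext i hi
      exact AdetS_congr g w w' v v' x j i (fun i' hi' => hw i' (hi'.trans hi.le))
        (fun i' hi' => hv i' (hi'.trans hi.le))
    rw [h1, hw k le_rfl, hv k le_rfl]
termination_by k.1
decreasing_by exact hi

lemma ennreal_cancel_aux (e x y : ℝ≥0∞) (he0 : e ≠ 0) (heT : e ≠ ⊤) :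
    (e * x)⁻¹ * (e * y) = x⁻¹ * y := by
  rw [ENNReal.mul_inv (Or.inl he0) (Or.inl heT), mul_mul_mul_comm,
    ENNReal.inv_mul_cancel he0 heT, one_mul]

/-- **Lemma 1 (discrete form).** For `j < k`, the conditional distribution of the
confounder `C_k` given the first `k+1` actions is the same in the single-intervention
model `do(A_j)` as in the observational model. -/
theorem confounder_single_int_equals_conditional
    {Ω : Type} [MeasurableSpace Ω] (P : MeasureTheory.Measure Ω) [MeasureTheory.IsProbabilityMeasure P]
    {K : ℕ} (hK : 1 ≤ K)
    {α β γ : Type} [Fintype α] [Nonempty α] [MeasurableSpace α] [MeasurableSingletonClass α]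
    [Fintype β] [Nonempty β] [MeasurableSpace β] [MeasurableSingletonClass β]
    [Fintype γ] [Nonempty γ] [MeasurableSpace γ] [MeasurableSingletonClass γ]
    (W : Fin K → Ω → γ) (V : Fin K → Ω → β) (ξ : Fin K → Ω → α) (U : Ω → ℝ)
    (hW : ∀ k, Measurable (W k)) (hV : ∀ k, Measurable (V k))
    (hξ : ∀ k, Measurable (ξ k)) (hU : Measurable U)
    (hindep : iIndepFun (m := noiseMS K α β γ) (noiseFam W V ξ U) P)
    (hUint : MeasureTheory.Integrable U P) (hU0 : ∫ ω, U ω ∂P = 0)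
    (g : (k : Fin K) → ((i : Fin K) → i < k → α) → γ → β → α)
    (f : Fin K → α → γ → ℝ)
    (j k : Fin K) (hjk : j < k) (c : γ) (a : Fin K → α)
    (ha1 : 0 < P (⋂ i, ⋂ (_ : i ≤ k), {ω | Asingle g W V ξ j i ω = a i}))
    (ha2 : 0 < P (⋂ i, ⋂ (_ : i ≤ k), {ω | Aobs g W V i ω = a i})) :
    (P[|⋂ i, ⋂ (_ : i ≤ k), {ω | Asingle g W V ξ j i ω = a i}]) {ω | W k ω = c}
      = (P[|⋂ i, ⋂ (_ : i ≤ k), {ω | Aobs g W V i ω = a i}]) {ω | W k ω = c} := by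
  classical
  letI : ∀ i, MeasurableSpace (NoiseCodom K α β γ i) := noiseMS K α β γ
  obtain ⟨w0⟩ := ‹Nonempty γ›
  obtain ⟨v0⟩ := ‹Nonempty β›
  -- index bookkeeping
  set ι := (Fin K ⊕ Fin K ⊕ Fin K ⊕ Unit) with hι
  set T : Finset ι := {Sum.inl k, Sum.inr (Sum.inl k)} with hT
  have hmem1 : ∀ i : Fin K, ¬ i = k → (Sum.inl i : ι) ∈ Tᶜ := by
    intro i hi; simp [hT, hi]
  have hmem2 : ∀ i : Fin K, ¬ i = k → (Sum.inr (Sum.inl i) : ι) ∈ Tᶜ := by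
    intro i hi; simp [hT, hi]
  have hmem3 : (Sum.inr (Sum.inr (Sum.inl j)) : ι) ∈ Tᶜ := by simp [hT]
  have hmemT1 : (Sum.inl k : ι) ∈ T := by simp [hT]
  have hmemT2 : (Sum.inr (Sum.inl k) : ι) ∈ T := by simp [hT]
  have hnm : ∀ i : ι, Measurable (noiseFam W V ξ U i) := by
    rintro (i | i | i | i)
    · exact hW i
    · exact hV i
    · exact hξ i
    · exact hU
  -- the two composed random vectors
  set ψ : ((s : (Tᶜ : Finset ι)) → NoiseCodom K α β γ s) → (Fin K → γ) × (Fin K → β) × α :=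
    fun x => (fun i => if h : i = k then w0 else x ⟨Sum.inl i, hmem1 i h⟩,
              fun i => if h : i = k then v0 else x ⟨Sum.inr (Sum.inl i), hmem2 i h⟩,
              x ⟨Sum.inr (Sum.inr (Sum.inl j)), hmem3⟩) with hψdef
  set χ : ((s : (T : Finset ι)) → NoiseCodom K α β γ s) → γ × β :=
    fun x => (x ⟨Sum.inl k, hmemT1⟩, x ⟨Sum.inr (Sum.inl k), hmemT2⟩) with hχdef
  have hψ : Measurable ψ := by
    rw [hψdef]
    refine Measurable.prodMk ?_ (Measurable.prodMk ?_ (measurable_pi_apply _))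
    · refine measurable_pi_lambda _ fun i => ?_
      by_cases h : i = k
      · simp only [h, eq_self_iff_true, ↓reduceDIte]; exact measurable_const
      · simp only [h, ↓reduceDIte]; exact measurable_pi_apply _
    · refine measurable_pi_lambda _ fun i => ?_
      by_cases h : i = k
      · simp only [h, eq_self_iff_true, ↓reduceDIte]; exact measurable_const
      · simp only [h, ↓reduceDIte]; exact measurable_pi_apply _
  have hχ : Measurable χ :=
    (measurable_pi_apply _).prodMk (measurable_pi_apply _)
  set Φ : Ω → (Fin K → γ) × (Fin K → β) × α :=
    ψ ∘ (fun ω (s : (Tᶜ : Finset ι)) => noiseFam W V ξ U s ω) with hΦdef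
  set Θ : Ω → γ × β := fun ω => (W k ω, V k ω) with hΘdef
  have hΦ : Measurable Φ :=
    hψ.comp (measurable_pi_lambda _ fun s => hnm s)
  have hΘ : Measurable Θ := (hW k).prodMk (hV k)
  have hΦΘ : IndepFun Φ Θ P := by
    have hcomp := (hindep.indepFun_finset Tᶜ T disjoint_compl_left hnm).comp hψ hχ
    exact hcomp
  -- everything in the finite codomains is measurable
  have hmeasAll : ∀ s : Set ((Fin K → γ) × (Fin K → β) × α), MeasurableSet s :=
    fun s => s.to_countable.measurableSet
  have hmeasAll2 : ∀ s : Set (γ × β), MeasurableSet s :=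
    fun s => s.to_countable.measurableSet
  -- the target sets
  set N : Set (γ × β) := {p | g k (fun i _ => a i) p.1 p.2 = a k} with hN
  set N' : Set (γ × β) := {p | p ∈ N ∧ p.1 = c} with hN'
  set MO : Set ((Fin K → γ) × (Fin K → β) × α) :=
    {p | ∀ i, i < k → Adet g p.1 p.2.1 i = a i} with hMO
  set MS : Set ((Fin K → γ) × (Fin K → β) × α) :=
    {p | ∀ i, i < k → AdetS g p.1 p.2.1 p.2.2 j i = a i} with hMS
  -- component computations for Φ
  have hΦ1 : ∀ (ω : Ω) (i : Fin K), ¬ i = k → (Φ ω).1 i = W i ω := by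
    intro ω i h
    rw [hΦdef]
    simp only [Function.comp_apply, hψdef, h, ↓reduceDIte]
    rfl
  have hΦ2 : ∀ (ω : Ω) (i : Fin K), ¬ i = k → (Φ ω).2.1 i = V i ω := by
    intro ω i h
    rw [hΦdef]
    simp only [Function.comp_apply, hψdef, h, ↓reduceDIte]
    rfl
  have hΦ3 : ∀ ω : Ω, (Φ ω).2.2 = ξ j ω := fun ω => rfl
  have hne : ∀ i i' : Fin K, i' ≤ i → i < k → ¬ i' = k := by
    intro i i' hi' hik h
    exact absurd ((h ▸ hi').trans_lt hik) (lt_irrefl k)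
  -- relating the random recursions to the deterministic ones evaluated at Φ
  have hAo : ∀ (ω : Ω) (i : Fin K), i < k →
      Aobs g W V i ω = Adet g (Φ ω).1 (Φ ω).2.1 i := by
    intro ω i hik
    rw [Aobs_eq_Adet]
    exact Adet_congr g _ _ _ _ i
      (fun i' hi' => (hΦ1 ω i' (hne i i' hi' hik)).symm)
      (fun i' hi' => (hΦ2 ω i' (hne i i' hi' hik)).symm)
  have hAs : ∀ (ω : Ω) (i : Fin K), i < k →
      Asingle g W V ξ j i ω = AdetS g (Φ ω).1 (Φ ω).2.1 (Φ ω).2.2 j i := by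
    intro ω i hik
    rw [Asingle_eq_AdetS, hΦ3]
    exact AdetS_congr g _ _ _ _ _ j i
      (fun i' hi' => (hΦ1 ω i' (hne i i' hi' hik)).symm)
      (fun i' hi' => (hΦ2 ω i' (hne i i' hi' hik)).symm)
  -- the event identities
  have claim_o : (⋂ i, ⋂ (_ : i ≤ k), {ω | Aobs g W V i ω = a i})
      = Φ ⁻¹' MO ∩ Θ ⁻¹' N := by
    ext ω
    simp only [Set.mem_iInter, Set.mem_inter_iff, Set.mem_preimage, Set.mem_setOf_eq,
      hMO, hN, hΘdef]
    constructor
    · intro h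
      refine ⟨fun i hi => by rw [← hAo ω i hi]; exact h i hi.le, ?_⟩
      have hk := h k le_rfl
      rw [Aobs] at hk
      have h2 : (fun i (_ : i < k) => Aobs g W V i ω) = fun i (_ : i < k) => a i := by
        funext i hi; exact h i hi.le
      rw [h2] at hk
      exact hk
    · rintro ⟨hM, hNm⟩ i hi
      rcases lt_or_eq_of_le hi with hlt | heq
      · rw [hAo ω i hlt]; exact hM i hlt
      · subst heq
        rw [Aobs]
        have h2 : (fun i' (_ : i' < i) => Aobs g W V i' ω) = fun i' (_ : i' < i) => a i' := by
          funext i' hi'; rw [hAo ω i' hi']; exact hM i' hi'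
        rw [h2]
        exact hNm
  have claim_s : (⋂ i, ⋂ (_ : i ≤ k), {ω | Asingle g W V ξ j i ω = a i})
      = Φ ⁻¹' MS ∩ Θ ⁻¹' N := by
    ext ω
    simp only [Set.mem_iInter, Set.mem_inter_iff, Set.mem_preimage, Set.mem_setOf_eq,
      hMS, hN, hΘdef]
    constructor
    · intro h
      refine ⟨fun i hi => by rw [← hAs ω i hi]; exact h i hi.le, ?_⟩
      have hk := h k le_rfl
      rw [Asingle, if_neg hjk.ne'] at hk
      have h2 : (fun i (_ : i < k) => Asingle g W V ξ j i ω) = fun i (_ : i < k) => a i := by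
        funext i hi; exact h i hi.le
      rw [h2] at hk
      exact hk
    · rintro ⟨hM, hNm⟩ i hi
      rcases lt_or_eq_of_le hi with hlt | heq
      · rw [hAs ω i hlt]; exact hM i hlt
      · subst heq
        rw [Asingle, if_neg hjk.ne']
        have h2 : (fun i' (_ : i' < i) => Asingle g W V ξ j i' ω)
            = fun i' (_ : i' < i) => a i' := by
          funext i' hi'; rw [hAs ω i' hi']; exact hM i' hi'
        rw [h2]
        exact hNm
  -- independence yields the product formulas
  have hprod : ∀ (M1 : Set ((Fin K → γ) × (Fin K → β) × α)) (N1 : Set (γ × β)),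
      P (Φ ⁻¹' M1 ∩ Θ ⁻¹' N1) = P (Φ ⁻¹' M1) * P (Θ ⁻¹' N1) :=
    fun M1 N1 => (indepFun_iff_measure_inter_preimage_eq_mul.mp hΦΘ) M1 N1
      (hmeasAll M1) (hmeasAll2 N1)
  -- intersecting with the confounder event
  have hint : ∀ M1 : Set ((Fin K → γ) × (Fin K → β) × α),
      (Φ ⁻¹' M1 ∩ Θ ⁻¹' N) ∩ {ω | W k ω = c} = Φ ⁻¹' M1 ∩ Θ ⁻¹' N' := by
    intro M1
    ext ω
    simp only [Set.mem_inter_iff, Set.mem_preimage, Set.mem_setOf_eq, hN', hΘdef, and_assoc]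
  -- measurability of the conditioning events
  have hsS : MeasurableSet (⋂ i, ⋂ (_ : i ≤ k), {ω | Asingle g W V ξ j i ω = a i}) := by
    rw [claim_s]; exact (hΦ (hmeasAll MS)).inter (hΘ (hmeasAll2 N))
  have hsO : MeasurableSet (⋂ i, ⋂ (_ : i ≤ k), {ω | Aobs g W V i ω = a i}) := by
    rw [claim_o]; exact (hΦ (hmeasAll MO)).inter (hΘ (hmeasAll2 N))
  -- positivity
  rw [claim_s, hprod] at ha1
  rw [claim_o, hprod] at ha2
  have hS0 : P (Φ ⁻¹' MS) ≠ 0 := by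
    intro h0; rw [h0, zero_mul] at ha1; exact lt_irrefl 0 ha1
  have hO0 : P (Φ ⁻¹' MO) ≠ 0 := by
    intro h0; rw [h0, zero_mul] at ha2; exact lt_irrefl 0 ha2
  -- final computation
  rw [cond_apply hsS P, cond_apply hsO P, claim_s, claim_o, hint MS, hint MO,
    hprod, hprod, hprod, hprod,
    ennreal_cancel_aux _ _ _ hS0 (measure_ne_top P _),
    ennreal_cancel_aux _ _ _ hO0 (measure_ne_top P _)]
end

section
/- Let j, k be indices with j < k. For every partial action profile a_0, …, a_k : α such that the events ⋂_{i < k} {Ã^j_i = a_i} and ⋂_{i < k} {A_i = a_i} both have positive probability: P[{Ã^j_k = a_k} | ⋂_{i < k} {Ã^j_i = a_i}] = P[{A_k = a_k} | ⋂_{i < k} {A_i = a_i}]. That is, the conditional distribution of the action A_k given the preceding actions is unchanged by the intervention on A_j. -/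
open MeasureTheory ProbabilityTheory
open scoped ENNReal

/-! ### Auxiliary machinery -/

/-- Deterministic version of `Asingle`, as a function of the noise values. -/
def AsingleDet {α β γ : Type} {K : ℕ}
    (g : (k : Fin K) → ((i : Fin K) → i < k → α) → γ → β → α)
    (w : Fin K → γ) (v : Fin K → β) (x : α) (j : Fin K) (k : Fin K) : α :=
  if k = j then x
  else g k (fun i _ => AsingleDet g w v x j i) (w k) (v k)
termination_by k.1
decreasing_by exact ‹_ < k›

/-- Deterministic version of `Aobs`, as a function of the noise values. -/
def AobsDet {α β γ : Type} {K : ℕ}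
    (g : (k : Fin K) → ((i : Fin K) → i < k → α) → γ → β → α)
    (w : Fin K → γ) (v : Fin K → β) (k : Fin K) : α :=
  g k (fun i _ => AobsDet g w v i) (w k) (v k)
termination_by k.1
decreasing_by exact ‹_ < k›

/-- Strong induction helper for `Fin`. -/
lemma finStrongInd {K : ℕ} {P : Fin K → Prop}
    (h : ∀ i : Fin K, (∀ m, m < i → P m) → P i) : ∀ i, P i := by
  have H : ∀ n : ℕ, ∀ i : Fin K, i.1 < n → P i := by
    intro n
    induction n with
    | zero => intro i hi; omega
    | succ n ih =>
      intro i hi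
      exact h i (fun m hm => ih m (by omega))
  exact fun i => H (i.1 + 1) i (by omega)

lemma Asingle_eq_det {Ω α β γ : Type} {K : ℕ}
    (g : (k : Fin K) → ((i : Fin K) → i < k → α) → γ → β → α)
    (W : Fin K → Ω → γ) (V : Fin K → Ω → β) (ξ : Fin K → Ω → α)
    (j : Fin K) (ω : Ω) :
    ∀ i, Asingle g W V ξ j i ω
      = AsingleDet g (fun m => W m ω) (fun m => V m ω) (ξ j ω) j i := by
  refine finStrongInd fun i ih => ?_
  rw [Asingle, AsingleDet]
  split
  · rfl
  · have : (fun (m : Fin K) (_ : m < i) => Asingle g W V ξ j m ω)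
        = (fun (m : Fin K) (_ : m < i) =>
            AsingleDet g (fun m => W m ω) (fun m => V m ω) (ξ j ω) j m) := by
      funext m hm; exact ih m hm
    rw [this]

lemma Aobs_eq_det {Ω α β γ : Type} {K : ℕ}
    (g : (k : Fin K) → ((i : Fin K) → i < k → α) → γ → β → α)
    (W : Fin K → Ω → γ) (V : Fin K → Ω → β) (ω : Ω) :
    ∀ i, Aobs g W V i ω = AobsDet g (fun m => W m ω) (fun m => V m ω) i := by
  refine finStrongInd fun i ih => ?_
  rw [Aobs, AobsDet]
  have : (fun (m : Fin K) (_ : m < i) => Aobs g W V m ω)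
      = (fun (m : Fin K) (_ : m < i) =>
          AobsDet g (fun m => W m ω) (fun m => V m ω) m) := by
    funext m hm; exact ih m hm
  rw [this]

lemma AsingleDet_congr {α β γ : Type} {K : ℕ}
    (g : (k : Fin K) → ((i : Fin K) → i < k → α) → γ → β → α)
    (w w' : Fin K → γ) (v v' : Fin K → β) (x : α) (j : Fin K) :
    ∀ i, (∀ m, m ≤ i → w m = w' m) → (∀ m, m ≤ i → v m = v' m) →
      AsingleDet g w v x j i = AsingleDet g w' v' x j i := by
  refine finStrongInd fun i ih => ?_
  intro hw hv
  rw [AsingleDet, AsingleDet]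
  split
  · rfl
  · rw [hw i le_rfl, hv i le_rfl]
    have : (fun (m : Fin K) (_ : m < i) => AsingleDet g w v x j m)
        = (fun (m : Fin K) (_ : m < i) => AsingleDet g w' v' x j m) := by
      funext m hm
      exact ih m hm (fun p hp => hw p (le_trans hp hm.le)) (fun p hp => hv p (le_trans hp hm.le))
    rw [this]

lemma AobsDet_congr {α β γ : Type} {K : ℕ}
    (g : (k : Fin K) → ((i : Fin K) → i < k → α) → γ → β → α)
    (w w' : Fin K → γ) (v v' : Fin K → β) :
    ∀ i, (∀ m, m ≤ i → w m = w' m) → (∀ m, m ≤ i → v m = v' m) →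
      AobsDet g w v i = AobsDet g w' v' i := by
  refine finStrongInd fun i ih => ?_
  intro hw hv
  rw [AobsDet, AobsDet, hw i le_rfl, hv i le_rfl]
  have : (fun (m : Fin K) (_ : m < i) => AobsDet g w v m)
      = (fun (m : Fin K) (_ : m < i) => AobsDet g w' v' m) := by
    funext m hm
    exact ih m hm (fun p hp => hw p (le_trans hp hm.le)) (fun p hp => hv p (le_trans hp hm.le))
  rw [this]

set_option linter.unnecessarySeqFocus false in
/-- Key independence: an event determined by the noises with index `< k` (and `ξ j`) is
independent of an event determined by `(W k, V k)`. -/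
lemma indep_of_past {Ω : Type} [MeasurableSpace Ω] (P : Measure Ω)
    {K : ℕ}
    {α β γ : Type} [Fintype α] [Nonempty α] [MeasurableSpace α] [MeasurableSingletonClass α]
    [Fintype β] [Nonempty β] [MeasurableSpace β] [MeasurableSingletonClass β]
    [Fintype γ] [Nonempty γ] [MeasurableSpace γ] [MeasurableSingletonClass γ]
    (W : Fin K → Ω → γ) (V : Fin K → Ω → β) (ξ : Fin K → Ω → α) (U : Ω → ℝ)
    (hW : ∀ m, Measurable (W m)) (hV : ∀ m, Measurable (V m))
    (hξ : ∀ m, Measurable (ξ m)) (hU : Measurable U)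
    (hindep : iIndepFun (m := noiseMS K α β γ) (noiseFam W V ξ U) P)
    (j k : Fin K)
    (D : Set ((Fin K → γ) × (Fin K → β) × α))
    (hD : ∀ (w w' : Fin K → γ) (v v' : Fin K → β) (x : α),
        (∀ m, m < k → w m = w' m) → (∀ m, m < k → v m = v' m) →
        ((w, v, x) ∈ D ↔ (w', v', x) ∈ D))
    (N : Set (γ × β)) :
    P ({ω | ((fun m => W m ω), (fun m => V m ω), ξ j ω) ∈ D}
        ∩ {ω | (W k ω, V k ω) ∈ N})
      = P {ω | ((fun m => W m ω), (fun m => V m ω), ξ j ω) ∈ D}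
        * P {ω | (W k ω, V k ω) ∈ N} := by
  classical
  set ι := (Fin K ⊕ Fin K ⊕ Fin K ⊕ Unit) with hι
  letI : ∀ i : ι, MeasurableSpace (NoiseCodom K α β γ i) := noiseMS K α β γ
  let S₁ : Finset ι := Finset.univ.filter (fun i => match i with
    | .inl m => m < k
    | .inr (.inl m) => m < k
    | .inr (.inr (.inl m)) => m = j
    | .inr (.inr (.inr _)) => False)
  let S₂ : Finset ι := {Sum.inl k, Sum.inr (Sum.inl k)}
  have hdisj : Disjoint S₁ S₂ := by
    rw [Finset.disjoint_right]
    intro i hi2 hi1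
    simp only [S₂, Finset.mem_insert, Finset.mem_singleton] at hi2
    rcases hi2 with rfl | rfl <;>
      simp only [S₁, Finset.mem_filter, Finset.mem_univ, true_and] at hi1 <;>
      exact absurd hi1 (lt_irrefl k)
  have hmeas : ∀ i, Measurable (noiseFam W V ξ U i) := by
    intro i
    match i with
    | .inl m => exact hW m
    | .inr (.inl m) => exact hV m
    | .inr (.inr (.inl m)) => exact hξ m
    | .inr (.inr (.inr _)) => exact hU
  have hIF := hindep.indepFun_finset S₁ S₂ hdisj hmeas
  let φ : ((i : S₁) → NoiseCodom K α β γ i) → (Fin K → γ) × (Fin K → β) × α :=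
    fun t =>
      ((fun m => if h : Sum.inl m ∈ S₁ then t ⟨Sum.inl m, h⟩ else Classical.arbitrary γ),
       (fun m => if h : Sum.inr (Sum.inl m) ∈ S₁ then t ⟨Sum.inr (Sum.inl m), h⟩
          else Classical.arbitrary β),
       (if h : Sum.inr (Sum.inr (Sum.inl j)) ∈ S₁ then t ⟨Sum.inr (Sum.inr (Sum.inl j)), h⟩
          else Classical.arbitrary α))
  have hφ : Measurable φ := by
    refine Measurable.prod ?_ (Measurable.prod ?_ ?_)
    · refine measurable_pi_lambda _ fun m => ?_
      by_cases h : Sum.inl m ∈ S₁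
      · simp only [φ, dif_pos h]
        rw [show (fun c : ((i : S₁) → NoiseCodom K α β γ i) => if h : Sum.inl m ∈ S₁ then c ⟨Sum.inl m, h⟩ else Classical.arbitrary γ) = fun c => c ⟨Sum.inl m, h⟩ from funext fun c => dif_pos h]
        exact measurable_pi_apply (⟨Sum.inl m, h⟩ : S₁)
      · simp only [φ, dif_neg h]
        rw [show (fun c : ((i : S₁) → NoiseCodom K α β γ i) => if h : Sum.inl m ∈ S₁ then c ⟨Sum.inl m, h⟩ else Classical.arbitrary γ) = fun _ => Classical.arbitrary γ from funext fun c => dif_neg h]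
        exact measurable_const
    · refine measurable_pi_lambda _ fun m => ?_
      by_cases h : Sum.inr (Sum.inl m) ∈ S₁
      · simp only [φ, dif_pos h]
        rw [show (fun c : ((i : S₁) → NoiseCodom K α β γ i) => if h : Sum.inr (Sum.inl m) ∈ S₁ then c ⟨Sum.inr (Sum.inl m), h⟩ else Classical.arbitrary β) = fun c => c ⟨Sum.inr (Sum.inl m), h⟩ from funext fun c => dif_pos h]
        exact measurable_pi_apply (⟨Sum.inr (Sum.inl m), h⟩ : S₁)
      · simp only [φ, dif_neg h]
        rw [show (fun c : ((i : S₁) → NoiseCodom K α β γ i) => if h : Sum.inr (Sum.inl m) ∈ S₁ then c ⟨Sum.inr (Sum.inl m), h⟩ else Classical.arbitrary β) = fun _ => Classical.arbitrary β from funext fun c => dif_neg h]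
        exact measurable_const
    · by_cases h : Sum.inr (Sum.inr (Sum.inl j)) ∈ S₁
      · simp only [φ, dif_pos h]
        rw [show (fun c : ((i : S₁) → NoiseCodom K α β γ i) => if h : Sum.inr (Sum.inr (Sum.inl j)) ∈ S₁ then c ⟨Sum.inr (Sum.inr (Sum.inl j)), h⟩ else Classical.arbitrary α) = fun c => c ⟨Sum.inr (Sum.inr (Sum.inl j)), h⟩ from funext fun c => dif_pos h]
        exact measurable_pi_apply (⟨Sum.inr (Sum.inr (Sum.inl j)), h⟩ : S₁)
      · simp only [φ, dif_neg h]
        rw [show (fun c : ((i : S₁) → NoiseCodom K α β γ i) => if h : Sum.inr (Sum.inr (Sum.inl j)) ∈ S₁ then c ⟨Sum.inr (Sum.inr (Sum.inl j)), h⟩ else Classical.arbitrary α) = fun _ => Classical.arbitrary α from funext fun c => dif_neg h]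
        exact measurable_const
  have hk1 : Sum.inl k ∈ S₂ := by simp [S₂]
  have hk2 : Sum.inr (Sum.inl k) ∈ S₂ := by simp [S₂]
  let ψ : ((i : S₂) → NoiseCodom K α β γ i) → γ × β :=
    fun t => (t ⟨Sum.inl k, hk1⟩, t ⟨Sum.inr (Sum.inl k), hk2⟩)
  have hψ : Measurable ψ :=
    Measurable.prod (measurable_pi_apply _) (measurable_pi_apply _)
  have hM : MeasurableSet (φ ⁻¹' D) := hφ (Set.to_countable D).measurableSet
  have hN : MeasurableSet (ψ ⁻¹' N) := hψ (Set.to_countable N).measurableSet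
  have hmul := hIF.measure_inter_preimage_eq_mul _ _ hM hN
  have hE : (fun a (i : S₁) => noiseFam W V ξ U i a) ⁻¹' (φ ⁻¹' D)
      = {ω | ((fun m => W m ω), (fun m => V m ω), ξ j ω) ∈ D} := by
    ext ω
    simp only [Set.mem_preimage, Set.mem_setOf_eq]
    have hx : Sum.inr (Sum.inr (Sum.inl j)) ∈ S₁ := by
      simp [S₁]
    have hφval : φ (fun (i : S₁) => noiseFam W V ξ U i ω)
        = ((fun m => if Sum.inl m ∈ S₁ then W m ω else Classical.arbitrary γ),
           (fun m => if Sum.inr (Sum.inl m) ∈ S₁ then V m ω else Classical.arbitrary β),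
           ξ j ω) := by
      simp only [φ, hx, dif_pos]
      refine Prod.ext ?_ (Prod.ext ?_ (dif_pos hx))
      · funext m
        by_cases h : Sum.inl m ∈ S₁ <;> simp only [h, dif_pos, dif_neg, if_pos, if_neg,
          not_false_iff] <;> [exact dif_pos h; exact dif_neg h]
      · funext m
        by_cases h : Sum.inr (Sum.inl m) ∈ S₁ <;> simp only [h, dif_pos, dif_neg, if_pos, if_neg,
          not_false_iff] <;> [exact dif_pos h; exact dif_neg h]
    rw [hφval]
    exact hD _ _ _ _ _
      (fun m hm => by simp [S₁, hm])
      (fun m hm => by simp [S₁, hm])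
  have hB : (fun a (i : S₂) => noiseFam W V ξ U i a) ⁻¹' (ψ ⁻¹' N)
      = {ω | (W k ω, V k ω) ∈ N} := rfl
  rw [hE, hB] at hmul
  exact hmul

/-- **Denominator identity in Lemma 1 (discrete form).** For `j < k`, the conditional
distribution of the action `A_k` given the preceding actions is unchanged by the
intervention on `A_j`. -/
theorem action_conditional_unchanged_by_intervention
    {Ω : Type} [MeasurableSpace Ω] (P : MeasureTheory.Measure Ω) [MeasureTheory.IsProbabilityMeasure P]
    {K : ℕ} (hK : 1 ≤ K)
    {α β γ : Type} [Fintype α] [Nonempty α] [MeasurableSpace α] [MeasurableSingletonClass α]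
    [Fintype β] [Nonempty β] [MeasurableSpace β] [MeasurableSingletonClass β]
    [Fintype γ] [Nonempty γ] [MeasurableSpace γ] [MeasurableSingletonClass γ]
    (W : Fin K → Ω → γ) (V : Fin K → Ω → β) (ξ : Fin K → Ω → α) (U : Ω → ℝ)
    (hW : ∀ k, Measurable (W k)) (hV : ∀ k, Measurable (V k))
    (hξ : ∀ k, Measurable (ξ k)) (hU : Measurable U)
    (hindep : iIndepFun (m := noiseMS K α β γ) (noiseFam W V ξ U) P)
    (hUint : MeasureTheory.Integrable U P) (hU0 : ∫ ω, U ω ∂P = 0)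
    (g : (k : Fin K) → ((i : Fin K) → i < k → α) → γ → β → α)
    (f : Fin K → α → γ → ℝ)
    (j k : Fin K) (hjk : j < k) (a : Fin K → α)
    (ha1 : 0 < P (⋂ i, ⋂ (_ : i < k), {ω | Asingle g W V ξ j i ω = a i}))
    (ha2 : 0 < P (⋂ i, ⋂ (_ : i < k), {ω | Aobs g W V i ω = a i})) :
    (P[|⋂ i, ⋂ (_ : i < k), {ω | Asingle g W V ξ j i ω = a i}])
        {ω | Asingle g W V ξ j k ω = a k}
      = (P[|⋂ i, ⋂ (_ : i < k), {ω | Aobs g W V i ω = a i}])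
          {ω | Aobs g W V k ω = a k} := by
  classical
  -- deterministic descriptions of the conditioning events
  set D1 : Set ((Fin K → γ) × (Fin K → β) × α) :=
    {p | ∀ i, i < k → AsingleDet g p.1 p.2.1 p.2.2 j i = a i} with hD1def
  set D2 : Set ((Fin K → γ) × (Fin K → β) × α) :=
    {p | ∀ i, i < k → AobsDet g p.1 p.2.1 i = a i} with hD2def
  set N : Set (γ × β) := {p | g k (fun i _ => a i) p.1 p.2 = a k} with hNdef
  have htupm : Measurable (fun ω => ((fun m => W m ω), (fun m => V m ω), ξ j ω) :
      Ω → (Fin K → γ) × (Fin K → β) × α) :=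
    (measurable_pi_lambda _ fun m => hW m).prodMk
      ((measurable_pi_lambda _ fun m => hV m).prodMk (hξ j))
  -- identify the conditioning events
  have hE1 : (⋂ i, ⋂ (_ : i < k), {ω | Asingle g W V ξ j i ω = a i})
      = {ω | ((fun m => W m ω), (fun m => V m ω), ξ j ω) ∈ D1} := by
    ext ω
    simp only [Set.mem_iInter, Set.mem_setOf_eq, hD1def, Asingle_eq_det]
  have hE2 : (⋂ i, ⋂ (_ : i < k), {ω | Aobs g W V i ω = a i})
      = {ω | ((fun m => W m ω), (fun m => V m ω), ξ j ω) ∈ D2} := by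
    ext ω
    simp only [Set.mem_iInter, Set.mem_setOf_eq, hD2def, Aobs_eq_det]
  -- the D's only depend on coordinates below k
  have hD1 : ∀ (w w' : Fin K → γ) (v v' : Fin K → β) (x : α),
      (∀ m, m < k → w m = w' m) → (∀ m, m < k → v m = v' m) →
      ((w, v, x) ∈ D1 ↔ (w', v', x) ∈ D1) := by
    intro w w' v v' x hw hv
    have h : ∀ i, i < k → AsingleDet g w v x j i = AsingleDet g w' v' x j i := fun i hi =>
      AsingleDet_congr g w w' v v' x j i
        (fun m hm => hw m (lt_of_le_of_lt hm hi)) (fun m hm => hv m (lt_of_le_of_lt hm hi))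
    simp only [hD1def, Set.mem_setOf_eq]
    exact forall_congr' fun i => imp_congr_right fun hi => by rw [h i hi]
  have hD2 : ∀ (w w' : Fin K → γ) (v v' : Fin K → β) (x : α),
      (∀ m, m < k → w m = w' m) → (∀ m, m < k → v m = v' m) →
      ((w, v, x) ∈ D2 ↔ (w', v', x) ∈ D2) := by
    intro w w' v v' x hw hv
    have h : ∀ i, i < k → AobsDet g w v i = AobsDet g w' v' i := fun i hi =>
      AobsDet_congr g w w' v v' i
        (fun m hm => hw m (lt_of_le_of_lt hm hi)) (fun m hm => hv m (lt_of_le_of_lt hm hi))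
    simp only [hD2def, Set.mem_setOf_eq]
    exact forall_congr' fun i => imp_congr_right fun hi => by rw [h i hi]
  -- on the conditioning event, the k-th action is a fixed function of (W k, V k)
  have hstep1 : {ω | ((fun m => W m ω), (fun m => V m ω), ξ j ω) ∈ D1}
        ∩ {ω | Asingle g W V ξ j k ω = a k}
      = {ω | ((fun m => W m ω), (fun m => V m ω), ξ j ω) ∈ D1}
        ∩ {ω | (W k ω, V k ω) ∈ N} := by
    ext ω
    simp only [Set.mem_inter_iff, Set.mem_setOf_eq, hD1def, hNdef]
    refine and_congr_right fun h1 => ?_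
    have hAk : Asingle g W V ξ j k ω = g k (fun i _ => a i) (W k ω) (V k ω) := by
      rw [Asingle, if_neg (ne_of_gt hjk)]
      have : (fun (i : Fin K) (_ : i < k) => Asingle g W V ξ j i ω)
          = (fun (i : Fin K) (_ : i < k) => a i) := by
        funext i hi
        rw [Asingle_eq_det]
        exact h1 i hi
      rw [this]
    rw [hAk]
  have hstep2 : {ω | ((fun m => W m ω), (fun m => V m ω), ξ j ω) ∈ D2}
        ∩ {ω | Aobs g W V k ω = a k}
      = {ω | ((fun m => W m ω), (fun m => V m ω), ξ j ω) ∈ D2}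
        ∩ {ω | (W k ω, V k ω) ∈ N} := by
    ext ω
    simp only [Set.mem_inter_iff, Set.mem_setOf_eq, hD2def, hNdef]
    refine and_congr_right fun h1 => ?_
    have hAk : Aobs g W V k ω = g k (fun i _ => a i) (W k ω) (V k ω) := by
      rw [Aobs]
      have : (fun (i : Fin K) (_ : i < k) => Aobs g W V i ω)
          = (fun (i : Fin K) (_ : i < k) => a i) := by
        funext i hi
        rw [Aobs_eq_det]
        exact h1 i hi
      rw [this]
    rw [hAk]
  -- independence
  have key1 := indep_of_past P W V ξ U hW hV hξ hU hindep j k D1 hD1 N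
  have key2 := indep_of_past P W V ξ U hW hV hξ hU hindep j k D2 hD2 N
  -- measurability of the conditioning events
  have hmeasE1 : MeasurableSet
      {ω | ((fun m => W m ω), (fun m => V m ω), ξ j ω) ∈ D1} :=
    htupm (Set.to_countable D1).measurableSet
  have hmeasE2 : MeasurableSet
      {ω | ((fun m => W m ω), (fun m => V m ω), ξ j ω) ∈ D2} :=
    htupm (Set.to_countable D2).measurableSet
  rw [hE1] at ha1 ⊢
  rw [hE2] at ha2 ⊢
  rw [cond_apply hmeasE1 P, cond_apply hmeasE2 P, hstep1, hstep2, key1, key2,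
    ← mul_assoc, ← mul_assoc,
    ENNReal.inv_mul_cancel (ne_of_gt ha1) (measure_ne_top P _), one_mul,
    ENNReal.inv_mul_cancel (ne_of_gt ha2) (measure_ne_top P _), one_mul]
end

section
/- For every action profile a : Fin K → α with P({Ā = a}) > 0 and every confounder profile c : Fin K → γ: P[⋂_k {C_k = c_k} | {Ā = a}] = Π_k P(C_k = c_k). That is, under joint intervention on all actions, the confounders are jointly independent of the actions and of each other, each retaining its observational marginal law. -/
open MeasureTheory ProbabilityTheory
open scoped ENNReal

/-- Auxiliary family of events for the independence computation. -/
private def condSets {Ω α γ : Type} {K : ℕ} (W : Fin K → Ω → γ) (ξ : Fin K → Ω → α)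
    (a : Fin K → α) (c : Fin K → γ) : (Fin K ⊕ Fin K ⊕ Fin K ⊕ Unit) → Set Ω
  | .inl k => W k ⁻¹' {c k}
  | .inr (.inl _) => Set.univ
  | .inr (.inr (.inl k)) => ξ k ⁻¹' {a k}
  | .inr (.inr (.inr _)) => Set.univ

/-- **Lemma 2(a) (discrete form).** Under joint intervention on all actions, the
confounders are jointly independent of the actions and of each other, each with its
observational marginal law. -/
theorem confounders_independent_under_joint_intervention
    {Ω : Type} [MeasurableSpace Ω] (P : MeasureTheory.Measure Ω) [MeasureTheory.IsProbabilityMeasure P]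
    {K : ℕ} (hK : 1 ≤ K)
    {α β γ : Type} [Fintype α] [Nonempty α] [MeasurableSpace α] [MeasurableSingletonClass α]
    [Fintype β] [Nonempty β] [MeasurableSpace β] [MeasurableSingletonClass β]
    [Fintype γ] [Nonempty γ] [MeasurableSpace γ] [MeasurableSingletonClass γ]
    (W : Fin K → Ω → γ) (V : Fin K → Ω → β) (ξ : Fin K → Ω → α) (U : Ω → ℝ)
    (hW : ∀ k, Measurable (W k)) (hV : ∀ k, Measurable (V k))
    (hξ : ∀ k, Measurable (ξ k)) (hU : Measurable U)
    (hindep : iIndepFun (m := noiseMS K α β γ) (noiseFam W V ξ U) P)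
    (hUint : MeasureTheory.Integrable U P) (hU0 : ∫ ω, U ω ∂P = 0)
    (g : (k : Fin K) → ((i : Fin K) → i < k → α) → γ → β → α)
    (f : Fin K → α → γ → ℝ)
    (a : Fin K → α) (ha : 0 < P (eventEq ξ a)) (c : Fin K → γ) :
    (P[|eventEq ξ a]) (⋂ k, {ω | W k ω = c k}) = ∏ k, P {ω | W k ω = c k} := by
  classical
  set ι := (Fin K ⊕ Fin K ⊕ Fin K ⊕ Unit) with hι
  let sets := condSets W ξ a c
  let S1 : Finset ι := Finset.univ.image (Sum.inl : Fin K → ι)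
  let S2 : Finset ι := Finset.univ.image (fun k : Fin K => (Sum.inr (Sum.inr (Sum.inl k)) : ι))
  have hinj1 : Function.Injective (Sum.inl : Fin K → ι) := Sum.inl_injective
  have hinj2 : Function.Injective (fun k : Fin K => (Sum.inr (Sum.inr (Sum.inl k)) : ι)) := by
    intro x y h; simpa using h
  have hmeas : ∀ i : ι,
      MeasurableSet[(noiseMS K α β γ i).comap (noiseFam W V ξ U i)] (sets i) := by
    rintro (k | k | k | u)
    · exact ⟨{c k}, show MeasurableSet ({c k} : Set γ) from measurableSet_singleton _, rfl⟩
    · exact MeasurableSet.univ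
    · exact ⟨{a k}, show MeasurableSet ({a k} : Set α) from measurableSet_singleton _, rfl⟩
    · exact MeasurableSet.univ
  have hprod : ∀ S : Finset ι, P (⋂ i ∈ S, sets i) = ∏ i ∈ S, P (sets i) :=
    fun S => hindep.meas_biInter (fun i _ => hmeas i)
  have hAset : (⋂ i ∈ S1, sets i) = ⋂ k, {ω | W k ω = c k} := by
    ext ω
    simp only [S1, sets, Set.mem_iInter, Finset.mem_image, Finset.mem_univ, true_and]
    constructor
    · intro h k; exact h _ ⟨k, rfl⟩
    · rintro h i ⟨k, rfl⟩; exact h k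
  have hEset : (⋂ i ∈ S2, sets i) = eventEq ξ a := by
    ext ω
    simp only [S2, sets, eventEq, Set.mem_iInter, Finset.mem_image, Finset.mem_univ, true_and]
    constructor
    · intro h k; exact h _ ⟨k, rfl⟩
    · rintro h i ⟨k, rfl⟩; exact h k
  have hdisj : Disjoint S1 S2 := by
    simp only [S1, S2, Finset.disjoint_left, Finset.mem_image, Finset.mem_univ, true_and]
    rintro i ⟨k, rfl⟩ ⟨k', h⟩; exact Sum.inr_ne_inl h
  have hunion : (⋂ i ∈ S1 ∪ S2, sets i) = (⋂ i ∈ S1, sets i) ∩ ⋂ i ∈ S2, sets i := by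
    ext ω
    simp only [Set.mem_iInter, Set.mem_inter_iff, Finset.mem_union]
    constructor
    · intro h; exact ⟨fun i hi => h i (Or.inl hi), fun i hi => h i (Or.inr hi)⟩
    · rintro ⟨h1, h2⟩ i (hi | hi); exacts [h1 i hi, h2 i hi]
  have hPA : P (⋂ k, {ω | W k ω = c k}) = ∏ k, P {ω | W k ω = c k} := by
    rw [← hAset, hprod S1, Finset.prod_image (fun x _ y _ h => hinj1 h)]
    rfl
  have hkey : P (eventEq ξ a ∩ ⋂ k, {ω | W k ω = c k})
      = P (eventEq ξ a) * P (⋂ k, {ω | W k ω = c k}) := by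
    rw [← hAset, ← hEset, Set.inter_comm, ← hunion, hprod (S1 ∪ S2),
      Finset.prod_union hdisj, hprod S1, hprod S2]
    exact mul_comm _ _
  have hEmeas : MeasurableSet (eventEq ξ a) :=
    MeasurableSet.iInter fun k => (hξ k) (measurableSet_singleton (a k))
  rw [cond_apply hEmeas, hkey, ← mul_assoc,
    ENNReal.inv_mul_cancel ha.ne' (measure_ne_top P _), one_mul, hPA]
end

section
/- Fix an index j. For every action profile a : Fin K → α such that P({Ã^j = a}) > 0 and P({A = a}) > 0, and every confounder profile c : Fin K → γ: P[⋂_k {C_k = c_k} | {Ã^j = a}] = P(C_j = c_j) · Π_{k ≠ j} P[{C_k = c_k} | {A = a}], where the conditional probabilities on the right-hand side are taken in the observational model. -/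
open MeasureTheory ProbabilityTheory
open scoped ENNReal

lemma eventEq_Aobs {Ω α β γ : Type} {K : ℕ}
    (g : (k : Fin K) → ((i : Fin K) → i < k → α) → γ → β → α)
    (W : Fin K → Ω → γ) (V : Fin K → Ω → β) (a : Fin K → α) :
    eventEq (Aobs g W V) a
      = ⋂ k, {ω | g k (fun i _ => a i) (W k ω) (V k ω) = a k} := by
  ext ω
  simp only [eventEq, Set.mem_iInter, Set.mem_setOf_eq]
  constructor
  · intro h k
    have hfun : (fun i (_ : i < k) => Aobs g W V i ω) = fun i (_ : i < k) => a i := by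
      funext i hi; exact h i
    have hk := h k
    rw [Aobs, hfun] at hk
    exact hk
  · intro h
    have main : ∀ n, ∀ k : Fin K, k.1 < n → Aobs g W V k ω = a k := by
      intro n
      induction n with
      | zero => intro k hk; omega
      | succ n ih =>
        intro k hk
        rw [Aobs]
        have hfun : (fun i (_ : i < k) => Aobs g W V i ω) = fun i (_ : i < k) => a i := by
          funext i hi
          have hi' : i.1 < k.1 := hi
          exact ih i (by omega)
        rw [hfun]
        exact h k
    exact fun k => main K k k.isLt

lemma eventEq_Asingle {Ω α β γ : Type} {K : ℕ}
    (g : (k : Fin K) → ((i : Fin K) → i < k → α) → γ → β → α)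
    (W : Fin K → Ω → γ) (V : Fin K → Ω → β) (ξ : Fin K → Ω → α) (j : Fin K) (a : Fin K → α) :
    eventEq (Asingle g W V ξ j) a
      = ⋂ k, if k = j then {ω | ξ j ω = a j}
          else {ω | g k (fun i _ => a i) (W k ω) (V k ω) = a k} := by
  ext ω
  simp only [eventEq, Set.mem_iInter, Set.mem_setOf_eq]
  constructor
  · intro h k
    by_cases hkj : k = j
    · subst hkj
      simp only [if_pos rfl, Set.mem_setOf_eq]
      have hk := h k
      rw [Asingle, if_pos rfl] at hk
      exact hk
    · simp only [if_neg hkj, Set.mem_setOf_eq]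
      have hfun : (fun i (_ : i < k) => Asingle g W V ξ j i ω) = fun i (_ : i < k) => a i := by
        funext i hi; exact h i
      have hk := h k
      rw [Asingle, if_neg hkj, hfun] at hk
      exact hk
  · intro h
    have main : ∀ n, ∀ k : Fin K, k.1 < n → Asingle g W V ξ j k ω = a k := by
      intro n
      induction n with
      | zero => intro k hk; omega
      | succ n ih =>
        intro k hk
        by_cases hkj : k = j
        · subst hkj
          rw [Asingle, if_pos rfl]
          have hk2 := h k
          rw [if_pos rfl] at hk2
          exact hk2
        · rw [Asingle, if_neg hkj]
          have hfun : (fun i (_ : i < k) => Asingle g W V ξ j i ω) = fun i (_ : i < k) => a i := by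
            funext i hi
            have hi' : i.1 < k.1 := hi
            exact ih i (by omega)
          rw [hfun]
          have hk2 := h k
          rw [if_neg hkj] at hk2
          exact hk2
    exact fun k => main K k k.isLt
lemma noise_meas_biInter
    {Ω : Type} [MeasurableSpace Ω] (P : MeasureTheory.Measure Ω) [MeasureTheory.IsProbabilityMeasure P]
    {K : ℕ}
    {α β γ : Type} [Fintype α] [MeasurableSpace α] [MeasurableSingletonClass α]
    [Fintype β] [MeasurableSpace β] [MeasurableSingletonClass β]
    [Fintype γ] [MeasurableSpace γ] [MeasurableSingletonClass γ]
    (W : Fin K → Ω → γ) (V : Fin K → Ω → β) (ξ : Fin K → Ω → α) (U : Ω → ℝ)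
    (hW : ∀ k, Measurable (W k)) (hV : ∀ k, Measurable (V k))
    (hξ : ∀ k, Measurable (ξ k)) (hU : Measurable U)
    (hindep : iIndepFun (m := noiseMS K α β γ) (noiseFam W V ξ U) P)
    (S : Finset (Fin K)) (t : Fin K → Set (γ × β × α)) :
    P (⋂ k ∈ S, (fun ω => (W k ω, V k ω, ξ k ω)) ⁻¹' t k)
      = ∏ k ∈ S, P ((fun ω => (W k ω, V k ω, ξ k ω)) ⁻¹' t k) := by
  classical
  letI : ∀ i : (Fin K ⊕ Fin K ⊕ Fin K ⊕ Unit), MeasurableSpace (NoiseCodom K α β γ i) :=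
    noiseMS K α β γ
  have hF : ∀ i, Measurable (noiseFam W V ξ U i) := by
    intro i
    rcases i with k | k | k | u
    · exact hW k
    · exact hV k
    · exact hξ k
    · exact hU
  induction S using Finset.induction_on with
  | empty => simp
  | @insert k₀ S' hk₀ ih =>
    set ι := (Fin K ⊕ Fin K ⊕ Fin K ⊕ Unit) with hι
    let S1 : Finset ι := {Sum.inl k₀, Sum.inr (Sum.inl k₀), Sum.inr (Sum.inr (Sum.inl k₀))}
    let S2 : Finset ι := S'.biUnion
      (fun k => {Sum.inl k, Sum.inr (Sum.inl k), Sum.inr (Sum.inr (Sum.inl k))})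
    have hdisj : Disjoint S1 S2 := by
      simp only [Finset.disjoint_left, S1, S2, Finset.mem_insert, Finset.mem_singleton,
        Finset.mem_biUnion]
      rintro x hx ⟨k, hkS, hk'⟩
      rcases hx with rfl | rfl | rfl <;> aesop
    have hIF := hindep.indepFun_finset S1 S2 hdisj hF
    rw [ProbabilityTheory.indepFun_iff_measure_inter_preimage_eq_mul] at hIF
    have m1 : (Sum.inl k₀ : ι) ∈ S1 := by simp [S1]
    have m2 : (Sum.inr (Sum.inl k₀) : ι) ∈ S1 := by simp [S1]
    have m3 : (Sum.inr (Sum.inr (Sum.inl k₀)) : ι) ∈ S1 := by simp [S1]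
    have n1 : ∀ k ∈ S', (Sum.inl k : ι) ∈ S2 :=
      fun k hk => Finset.mem_biUnion.2 ⟨k, hk, by simp⟩
    have n2 : ∀ k ∈ S', (Sum.inr (Sum.inl k) : ι) ∈ S2 :=
      fun k hk => Finset.mem_biUnion.2 ⟨k, hk, by simp⟩
    have n3 : ∀ k ∈ S', (Sum.inr (Sum.inr (Sum.inl k)) : ι) ∈ S2 :=
      fun k hk => Finset.mem_biUnion.2 ⟨k, hk, by simp⟩
    let B1 : Set (∀ i : S1, NoiseCodom K α β γ i) :=
      (fun p => ((p ⟨_, m1⟩ : γ), (p ⟨_, m2⟩ : β), (p ⟨_, m3⟩ : α))) ⁻¹' t k₀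
    have hB1 : MeasurableSet B1 :=
      ((measurable_pi_apply _).prodMk
        ((measurable_pi_apply _).prodMk (measurable_pi_apply _)))
        (Set.toFinite (t k₀)).measurableSet
    let B2 : Set (∀ i : S2, NoiseCodom K α β γ i) :=
      ⋂ k, ⋂ (hk : k ∈ S'),
        (fun p => ((p ⟨_, n1 k hk⟩ : γ), (p ⟨_, n2 k hk⟩ : β), (p ⟨_, n3 k hk⟩ : α))) ⁻¹' t k
    have hB2 : MeasurableSet B2 :=
      MeasurableSet.iInter fun k => MeasurableSet.iInter fun hk =>
        ((measurable_pi_apply _).prodMk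
          ((measurable_pi_apply _).prodMk (measurable_pi_apply _)))
          (Set.toFinite (t k)).measurableSet
    have e1 : (fun ω (i : S1) => noiseFam W V ξ U i ω) ⁻¹' B1
        = (fun ω => (W k₀ ω, V k₀ ω, ξ k₀ ω)) ⁻¹' t k₀ := rfl
    have e2 : (fun ω (i : S2) => noiseFam W V ξ U i ω) ⁻¹' B2
        = ⋂ k ∈ S', (fun ω => (W k ω, V k ω, ξ k ω)) ⁻¹' t k := by
      ext ω
      simp only [Set.mem_preimage, B2, Set.mem_iInter]
      exact Iff.rfl
    have hstep := hIF B1 B2 hB1 hB2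
    rw [e1, e2] at hstep
    rw [Finset.set_biInter_insert, hstep, ih, Finset.prod_insert hk₀]
lemma ennreal_prod_inv {ι : Type} (s : Finset ι) (f : ι → ℝ≥0∞) (h0 : ∀ i ∈ s, f i ≠ 0) :
    (∏ i ∈ s, f i)⁻¹ = ∏ i ∈ s, (f i)⁻¹ := by
  classical
  induction s using Finset.induction_on with
  | empty => simp
  | @insert a s ha ih =>
    have hs0 : ∏ i ∈ s, f i ≠ 0 :=
      Finset.prod_ne_zero_iff.2 fun i hi => h0 i (Finset.mem_insert_of_mem hi)
    rw [Finset.prod_insert ha, Finset.prod_insert ha,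
      ENNReal.mul_inv (Or.inl (h0 a (Finset.mem_insert_self a s))) (Or.inr hs0),
      ih fun i hi => h0 i (Finset.mem_insert_of_mem hi)]

lemma final_arith {K : ℕ} (j : Fin K) (p q : Fin K → ℝ≥0∞) (r w : ℝ≥0∞)
    (hp0 : ∀ k, p k ≠ 0) (hpt : ∀ k, p k ≠ ∞) (hr0 : r ≠ 0) (hrt : r ≠ ∞) :
    (r * ∏ k ∈ Finset.univ.erase j, p k)⁻¹ * (w * r * ∏ k ∈ Finset.univ.erase j, q k)
      = w * ∏ k ∈ Finset.univ.erase j,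
          ((∏ i, p i)⁻¹ * (q k * ∏ i ∈ Finset.univ.erase k, p i)) := by
  classical
  set e := Finset.univ.erase j with he
  have hPe0 : ∏ k ∈ e, p k ≠ 0 := Finset.prod_ne_zero_iff.2 fun k _ => hp0 k
  have hPet : ∏ k ∈ e, p k ≠ ∞ := (ENNReal.prod_lt_top fun k _ => (hpt k).lt_top).ne
  calc (r * ∏ k ∈ e, p k)⁻¹ * (w * r * ∏ k ∈ e, q k)
      = (r⁻¹ * (∏ k ∈ e, p k)⁻¹) * (w * r * ∏ k ∈ e, q k) := by
        rw [ENNReal.mul_inv (Or.inl hr0) (Or.inl hrt)]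
    _ = w * ((r⁻¹ * r) * ((∏ k ∈ e, p k)⁻¹ * ∏ k ∈ e, q k)) := by ring
    _ = w * ((∏ k ∈ e, p k)⁻¹ * ∏ k ∈ e, q k) := by
        rw [ENNReal.inv_mul_cancel hr0 hrt, one_mul]
    _ = w * ∏ k ∈ e, ((p k)⁻¹ * q k) := by
        rw [Finset.prod_mul_distrib, ennreal_prod_inv _ _ fun k _ => hp0 k]
    _ = w * ∏ k ∈ e, ((∏ i, p i)⁻¹ * (q k * ∏ i ∈ Finset.univ.erase k, p i)) := by
        refine congrArg _ (Finset.prod_congr rfl fun k _ => ?_)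
        have hsplit : ∏ i, p i = p k * ∏ i ∈ Finset.univ.erase k, p i :=
          (Finset.mul_prod_erase _ _ (Finset.mem_univ k)).symm
        have hm0 : ∏ i ∈ Finset.univ.erase k, p i ≠ 0 :=
          Finset.prod_ne_zero_iff.2 fun i _ => hp0 i
        have hmt : ∏ i ∈ Finset.univ.erase k, p i ≠ ∞ :=
          (ENNReal.prod_lt_top fun i _ => (hpt i).lt_top).ne
        rw [hsplit, ENNReal.mul_inv (Or.inl (hp0 k)) (Or.inl (hpt k)),
          show (p k)⁻¹ * (∏ i ∈ Finset.univ.erase k, p i)⁻¹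
              * (q k * ∏ i ∈ Finset.univ.erase k, p i)
            = ((p k)⁻¹ * q k) * ((∏ i ∈ Finset.univ.erase k, p i)⁻¹
              * ∏ i ∈ Finset.univ.erase k, p i) from by ring,
          ENNReal.inv_mul_cancel hm0 hmt, mul_one]
def condSet {Ω α β γ : Type} {K : ℕ}
    (g : (k : Fin K) → ((i : Fin K) → i < k → α) → γ → β → α)
    (W : Fin K → Ω → γ) (V : Fin K → Ω → β) (a : Fin K → α) (k : Fin K) : Set Ω :=
  {ω | g k (fun i _ => a i) (W k ω) (V k ω) = a k}

lemma eventEq_Aobs' {Ω α β γ : Type} {K : ℕ}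
    (g : (k : Fin K) → ((i : Fin K) → i < k → α) → γ → β → α)
    (W : Fin K → Ω → γ) (V : Fin K → Ω → β) (a : Fin K → α) :
    eventEq (Aobs g W V) a = ⋂ k, condSet g W V a k := by
  rw [eventEq_Aobs]; rfl

lemma eventEq_Asingle' {Ω α β γ : Type} {K : ℕ}
    (g : (k : Fin K) → ((i : Fin K) → i < k → α) → γ → β → α)
    (W : Fin K → Ω → γ) (V : Fin K → Ω → β) (ξ : Fin K → Ω → α) (j : Fin K) (a : Fin K → α) :
    eventEq (Asingle g W V ξ j) a
      = ⋂ k, if k = j then {ω | ξ j ω = a j} else condSet g W V a k := by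
  rw [eventEq_Asingle]; rfl
/-- **Lemma 2(b) (discrete form).** Under a single intervention on `A_j`, the joint
conditional law of the confounders factorizes into the marginal of `C_j` times the
observational conditionals of the other confounders. -/
theorem confounders_factorize_under_single_intervention
    {Ω : Type} [MeasurableSpace Ω] (P : MeasureTheory.Measure Ω) [MeasureTheory.IsProbabilityMeasure P]
    {K : ℕ} (hK : 1 ≤ K)
    {α β γ : Type} [Fintype α] [Nonempty α] [MeasurableSpace α] [MeasurableSingletonClass α]
    [Fintype β] [Nonempty β] [MeasurableSpace β] [MeasurableSingletonClass β]
    [Fintype γ] [Nonempty γ] [MeasurableSpace γ] [MeasurableSingletonClass γ]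
    (W : Fin K → Ω → γ) (V : Fin K → Ω → β) (ξ : Fin K → Ω → α) (U : Ω → ℝ)
    (hW : ∀ k, Measurable (W k)) (hV : ∀ k, Measurable (V k))
    (hξ : ∀ k, Measurable (ξ k)) (hU : Measurable U)
    (hindep : iIndepFun (m := noiseMS K α β γ) (noiseFam W V ξ U) P)
    (hUint : MeasureTheory.Integrable U P) (hU0 : ∫ ω, U ω ∂P = 0)
    (g : (k : Fin K) → ((i : Fin K) → i < k → α) → γ → β → α)
    (f : Fin K → α → γ → ℝ)
    (j : Fin K) (a : Fin K → α)
    (ha1 : 0 < P (eventEq (Asingle g W V ξ j) a))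
    (ha2 : 0 < P (eventEq (Aobs g W V) a)) (c : Fin K → γ) :
    (P[|eventEq (Asingle g W V ξ j) a]) (⋂ k, {ω | W k ω = c k})
      = P {ω | W j ω = c j}
        * ∏ k ∈ Finset.univ.erase j,
            (P[|eventEq (Aobs g W V) a]) {ω | W k ω = c k} := by
  classical
  rw [eventEq_Asingle'] at ha1
  rw [eventEq_Aobs'] at ha2
  rw [eventEq_Asingle', eventEq_Aobs']
  -- measurability
  have hDm : ∀ k, MeasurableSet (condSet g W V a k) := fun k =>
    ((hW k).prodMk (hV k))
      (Set.toFinite {p : γ × β | g k (fun i _ => a i) p.1 p.2 = a k}).measurableSet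
  have hSξm : MeasurableSet {ω | ξ j ω = a j} := (hξ j) (measurableSet_singleton (a j))
  have hEm : MeasurableSet (⋂ k, condSet g W V a k) := MeasurableSet.iInter fun k => hDm k
  have hE2m : MeasurableSet (⋂ k, if k = j then {ω | ξ j ω = a j} else condSet g W V a k) := by
    refine MeasurableSet.iInter fun k => ?_
    by_cases hkj : k = j
    · rw [if_pos hkj]; exact hSξm
    · rw [if_neg hkj]; exact hDm k
  -- the master product formula
  have key : ∀ t : Fin K → Set (γ × β × α),
      P (⋂ k, (fun ω => (W k ω, V k ω, ξ k ω)) ⁻¹' t k)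
        = ∏ k, P ((fun ω => (W k ω, V k ω, ξ k ω)) ⁻¹' t k) := by
    intro t
    have h := noise_meas_biInter P W V ξ U hW hV hξ hU hindep Finset.univ t
    simpa using h
  -- identity III
  have hIII : P (⋂ k, condSet g W V a k) = ∏ k, P (condSet g W V a k) :=
    key fun k => {p : γ × β × α | g k (fun i _ => a i) p.1 p.2.1 = a k}
  -- identity I
  have hI : P (⋂ k, if k = j then {ω | ξ j ω = a j} else condSet g W V a k)
      = P {ω | ξ j ω = a j} * ∏ k ∈ Finset.univ.erase j, P (condSet g W V a k) := by
    have h := key fun k => if k = j then {p : γ × β × α | p.2.2 = a j}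
      else {p : γ × β × α | g k (fun i _ => a i) p.1 p.2.1 = a k}
    have hsets : ∀ k, (fun ω => (W k ω, V k ω, ξ k ω)) ⁻¹'
        (if k = j then {p : γ × β × α | p.2.2 = a j}
          else {p : γ × β × α | g k (fun i _ => a i) p.1 p.2.1 = a k})
        = if k = j then {ω | ξ j ω = a j} else condSet g W V a k := by
      intro k
      by_cases hkj : k = j
      · subst hkj; rw [if_pos rfl, if_pos rfl]; rfl
      · rw [if_neg hkj, if_neg hkj]; rfl
    simp only [hsets] at h
    rw [h, ← Finset.mul_prod_erase Finset.univ _ (Finset.mem_univ j), if_pos rfl]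
    exact congrArg _ (Finset.prod_congr rfl fun k hk => by
      rw [if_neg (Finset.ne_of_mem_erase hk)])
  -- identity II
  have hWξ : ProbabilityTheory.IndepFun (W j) (ξ j) P := by
    letI : ∀ i : (Fin K ⊕ Fin K ⊕ Fin K ⊕ Unit), MeasurableSpace (NoiseCodom K α β γ i) :=
      noiseMS K α β γ
    exact hindep.indepFun (show (Sum.inl j : Fin K ⊕ Fin K ⊕ Fin K ⊕ Unit)
      ≠ Sum.inr (Sum.inr (Sum.inl j)) by simp)
  have hWξ2 : P {ω | W j ω = c j ∧ ξ j ω = a j}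
      = P {ω | W j ω = c j} * P {ω | ξ j ω = a j} :=
    hWξ.measure_inter_preimage_eq_mul {c j} {a j}
      (measurableSet_singleton _) (measurableSet_singleton _)
  have hII : P ((⋂ k, if k = j then {ω | ξ j ω = a j} else condSet g W V a k)
        ∩ ⋂ k, {ω | W k ω = c k})
      = (P {ω | W j ω = c j} * P {ω | ξ j ω = a j})
        * ∏ k ∈ Finset.univ.erase j,
            P {ω | W k ω = c k ∧ g k (fun i _ => a i) (W k ω) (V k ω) = a k} := by
    have h := key fun k => if k = j then {p : γ × β × α | p.1 = c j ∧ p.2.2 = a j}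
      else {p : γ × β × α | p.1 = c k ∧ g k (fun i _ => a i) p.1 p.2.1 = a k}
    have hsets : ∀ k, (fun ω => (W k ω, V k ω, ξ k ω)) ⁻¹'
        (if k = j then {p : γ × β × α | p.1 = c j ∧ p.2.2 = a j}
          else {p : γ × β × α | p.1 = c k ∧ g k (fun i _ => a i) p.1 p.2.1 = a k})
        = if k = j then {ω | W j ω = c j ∧ ξ j ω = a j}
          else {ω | W k ω = c k ∧ g k (fun i _ => a i) (W k ω) (V k ω) = a k} := by
      intro k
      by_cases hkj : k = j
      · subst hkj; rw [if_pos rfl, if_pos rfl]; rfl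
      · rw [if_neg hkj, if_neg hkj]; rfl
    simp only [hsets] at h
    have hset2 : (⋂ k, if k = j then {ω | ξ j ω = a j} else condSet g W V a k)
          ∩ ⋂ k, {ω | W k ω = c k}
        = ⋂ k, if k = j then {ω | W j ω = c j ∧ ξ j ω = a j}
            else {ω | W k ω = c k ∧ g k (fun i _ => a i) (W k ω) (V k ω) = a k} := by
      ext ω
      simp only [Set.mem_inter_iff, Set.mem_iInter]
      constructor
      · rintro ⟨h1, h2⟩ k
        have h1k := h1 k
        have h2k := h2 k
        by_cases hkj : k = j
        · subst hkj
          rw [if_pos rfl] at h1k ⊢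
          simp only [Set.mem_setOf_eq] at h1k h2k ⊢
          exact ⟨h2k, h1k⟩
        · rw [if_neg hkj] at h1k ⊢
          simp only [condSet, Set.mem_setOf_eq] at h1k h2k ⊢
          exact ⟨h2k, h1k⟩
      · intro h
        refine ⟨fun k => ?_, fun k => ?_⟩ <;> have hk := h k
        · by_cases hkj : k = j
          · subst hkj
            rw [if_pos rfl] at hk ⊢
            simp only [Set.mem_setOf_eq] at hk ⊢
            exact hk.2
          · rw [if_neg hkj] at hk ⊢
            simp only [condSet, Set.mem_setOf_eq] at hk ⊢
            exact hk.2
        · by_cases hkj : k = j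
          · subst hkj
            rw [if_pos rfl] at hk
            simp only [Set.mem_setOf_eq] at hk ⊢
            exact hk.1
          · rw [if_neg hkj] at hk
            simp only [Set.mem_setOf_eq] at hk ⊢
            exact hk.1
    rw [hset2, h, ← Finset.mul_prod_erase Finset.univ _ (Finset.mem_univ j), if_pos rfl, hWξ2]
    exact congrArg _ (Finset.prod_congr rfl fun k hk => by
      rw [if_neg (Finset.ne_of_mem_erase hk)])
  -- identity IV
  have hIV : ∀ k₀ : Fin K, P ((⋂ k, condSet g W V a k) ∩ {ω | W k₀ ω = c k₀})
      = P {ω | W k₀ ω = c k₀ ∧ g k₀ (fun i _ => a i) (W k₀ ω) (V k₀ ω) = a k₀}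
        * ∏ i ∈ Finset.univ.erase k₀, P (condSet g W V a i) := by
    intro k₀
    have h := key fun k => if k = k₀
      then {p : γ × β × α | p.1 = c k₀ ∧ g k₀ (fun i _ => a i) p.1 p.2.1 = a k₀}
      else {p : γ × β × α | g k (fun i _ => a i) p.1 p.2.1 = a k}
    have hsets : ∀ k, (fun ω => (W k ω, V k ω, ξ k ω)) ⁻¹'
        (if k = k₀
          then {p : γ × β × α | p.1 = c k₀ ∧ g k₀ (fun i _ => a i) p.1 p.2.1 = a k₀}
          else {p : γ × β × α | g k (fun i _ => a i) p.1 p.2.1 = a k})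
        = if k = k₀
          then {ω | W k₀ ω = c k₀ ∧ g k₀ (fun i _ => a i) (W k₀ ω) (V k₀ ω) = a k₀}
          else condSet g W V a k := by
      intro k
      by_cases hkk : k = k₀
      · subst hkk; rw [if_pos rfl, if_pos rfl]; rfl
      · rw [if_neg hkk, if_neg hkk]; rfl
    simp only [hsets] at h
    have hset4 : (⋂ k, condSet g W V a k) ∩ {ω | W k₀ ω = c k₀}
        = ⋂ k, if k = k₀
            then {ω | W k₀ ω = c k₀ ∧ g k₀ (fun i _ => a i) (W k₀ ω) (V k₀ ω) = a k₀}
            else condSet g W V a k := by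
      ext ω
      simp only [Set.mem_inter_iff, Set.mem_iInter]
      constructor
      · rintro ⟨h1, h2⟩ k
        by_cases hkk : k = k₀
        · subst hkk
          rw [if_pos rfl]
          have h1k := h1 k
          simp only [condSet, Set.mem_setOf_eq] at h1k h2 ⊢
          exact ⟨h2, h1k⟩
        · rw [if_neg hkk]; exact h1 k
      · intro h
        constructor
        · intro k
          have hk := h k
          by_cases hkk : k = k₀
          · subst hkk
            rw [if_pos rfl] at hk
            simp only [condSet, Set.mem_setOf_eq] at hk ⊢
            exact hk.2
          · rw [if_neg hkk] at hk; exact hk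
        · have hk := h k₀
          rw [if_pos rfl] at hk
          simp only [Set.mem_setOf_eq] at hk ⊢
          exact hk.1
    rw [hset4, h, ← Finset.mul_prod_erase Finset.univ _ (Finset.mem_univ k₀), if_pos rfl]
    exact congrArg _ (Finset.prod_congr rfl fun k hk => by
      rw [if_neg (Finset.ne_of_mem_erase hk)])
  -- nonvanishing facts
  rw [hIII] at ha2
  rw [hI] at ha1
  have hp0 : ∀ k, P (condSet g W V a k) ≠ 0 := fun k =>
    Finset.prod_ne_zero_iff.1 ha2.ne' k (Finset.mem_univ k)
  have hpt : ∀ k, P (condSet g W V a k) ≠ ∞ := fun k => measure_ne_top P _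
  have hr0 : P {ω | ξ j ω = a j} ≠ 0 := (mul_ne_zero_iff.1 ha1.ne').1
  have hrt : P {ω | ξ j ω = a j} ≠ ∞ := measure_ne_top P _
  -- put the goal in scalar form
  rw [ProbabilityTheory.cond_apply hE2m P (⋂ k, {ω | W k ω = c k})]
  have hcond : ∀ k : Fin K, (P[|⋂ k, condSet g W V a k]) {ω | W k ω = c k}
      = (P (⋂ k, condSet g W V a k))⁻¹
        * P ((⋂ k, condSet g W V a k) ∩ {ω | W k ω = c k}) := fun k =>
    ProbabilityTheory.cond_apply hEm P _
  simp only [hcond, hIV, hIII, hI, hII]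
  exact final_arith j (fun k => P (condSet g W V a k))
    (fun k => P {ω | W k ω = c k ∧ g k (fun i _ => a i) (W k ω) (V k ω) = a k})
    (P {ω | ξ j ω = a j}) (P {ω | W j ω = c j}) hp0 hpt hr0 hrt
end

section
/- For every action profile a : Fin K → α with P({A = a}) > 0 and every confounder profile c : Fin K → γ: P[⋂_k {C_k = c_k} | {A = a}] = Π_k P[{C_k = c_k} | {A = a}]. That is, in the observational model the confounders are conditionally independent given all the actions. -/
open MeasureTheory ProbabilityTheory
open scoped ENNReal

set_option linter.unusedSectionVars false
set_option maxHeartbeats 1000000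

lemma Aobs_eq {Ω α β γ : Type} {K : ℕ}
    (g : (k : Fin K) → ((i : Fin K) → i < k → α) → γ → β → α)
    (W : Fin K → Ω → γ) (V : Fin K → Ω → β) (k : Fin K) (ω : Ω) :
    Aobs g W V k ω = g k (fun i _ => Aobs g W V i ω) (W k ω) (V k ω) := by
  rw [Aobs]

section Indep

variable {Ω : Type} [MeasurableSpace Ω] (P : MeasureTheory.Measure Ω)
    [MeasureTheory.IsProbabilityMeasure P]
    {K : ℕ}
    {α β γ : Type} [Fintype α] [MeasurableSpace α] [MeasurableSingletonClass α]
    [Fintype β] [MeasurableSpace β] [MeasurableSingletonClass β]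
    [Fintype γ] [MeasurableSpace γ] [MeasurableSingletonClass γ]
    (W : Fin K → Ω → γ) (V : Fin K → Ω → β) (ξ : Fin K → Ω → α) (U : Ω → ℝ)

/-- Rectangle factorization across coordinates. -/
lemma meas_iInter_WV
    (hindep : iIndepFun (m := noiseMS K α β γ) (noiseFam W V ξ U) P)
    (s : Fin K → Set γ) (t : Fin K → Set β)
    (hs : ∀ k, MeasurableSet (s k)) (ht : ∀ k, MeasurableSet (t k)) :
    P (⋂ k, (W k ⁻¹' s k ∩ V k ⁻¹' t k))
      = ∏ k, P (W k ⁻¹' s k ∩ V k ⁻¹' t k) := by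
  classical
  set ι := Fin K ⊕ Fin K ⊕ Fin K ⊕ Unit
  set F : ι → Set Ω := fun i =>
    match i with
    | .inl k => W k ⁻¹' s k
    | .inr (.inl k) => V k ⁻¹' t k
    | _ => Set.univ with hF
  set S : Finset ι :=
    (Finset.univ.image (Sum.inl : Fin K → ι)) ∪
    (Finset.univ.image (fun k => (Sum.inr (Sum.inl k) : ι))) with hSdef
  have hmeas : ∀ i, i ∈ S →
      MeasurableSet[(noiseMS K α β γ i).comap (noiseFam W V ξ U i)] (F i) := by
    rintro (k | k | k | u) _
    · exact ⟨s k, hs k, rfl⟩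
    · exact ⟨t k, ht k, rfl⟩
    · exact ⟨Set.univ, MeasurableSet.univ, by simp [F, noiseFam]; rfl⟩
    · exact ⟨Set.univ, MeasurableSet.univ, by simp [F, noiseFam]; rfl⟩
  have hbi := hindep.meas_biInter (S := S) (s := F) hmeas
  have hset : (⋂ i ∈ S, F i) = ⋂ k, (W k ⁻¹' s k ∩ V k ⁻¹' t k) := by
    ext ω
    simp only [Set.mem_iInter, Set.mem_inter_iff, hSdef, Finset.mem_union,
      Finset.mem_image, Finset.mem_univ, true_and]
    constructor
    · intro h k
      exact ⟨h (Sum.inl k) (Or.inl ⟨k, rfl⟩), h (Sum.inr (Sum.inl k)) (Or.inr ⟨k, rfl⟩)⟩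
    · rintro h i (⟨k, rfl⟩ | ⟨k, rfl⟩)
      · exact (h k).1
      · exact (h k).2
  have hdisj : Disjoint (Finset.univ.image (Sum.inl : Fin K → ι))
      (Finset.univ.image (fun k => (Sum.inr (Sum.inl k) : ι))) := by
    simp [Finset.disjoint_left]
  have hprod : ∏ i ∈ S, P (F i)
      = (∏ k, P (W k ⁻¹' s k)) * ∏ k, P (V k ⁻¹' t k) := by
    rw [hSdef, Finset.prod_union hdisj,
      Finset.prod_image (by intro x _ y _ h; exact Sum.inl.inj h),
      Finset.prod_image (by intro x _ y _ h; exact Sum.inl.inj (Sum.inr.inj h))]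
  have hpair : ∀ k, P (W k ⁻¹' s k ∩ V k ⁻¹' t k)
      = P (W k ⁻¹' s k) * P (V k ⁻¹' t k) := by
    intro k
    have hij : (Sum.inl k : ι) ≠ Sum.inr (Sum.inl k) := by simp
    have hIF : IndepFun (W k) (V k) P := hindep.indepFun hij
    exact hIF.meas_inter ⟨s k, hs k, rfl⟩ ⟨t k, ht k, rfl⟩
  rw [← hset, hbi, hprod, ← Finset.prod_mul_distrib]
  exact Finset.prod_congr rfl fun k _ => (hpair k).symm

/-- Factorization for arbitrary per-coordinate events on `(W_k, V_k)`. -/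
lemma meas_iInter_pair
    (hindep : iIndepFun (m := noiseMS K α β γ) (noiseFam W V ξ U) P)
    (hW : ∀ k, Measurable (W k)) (hV : ∀ k, Measurable (V k))
    (Q : Fin K → Set (γ × β)) :
    P (⋂ k, {ω | (W k ω, V k ω) ∈ Q k})
      = ∏ k, P {ω | (W k ω, V k ω) ∈ Q k} := by
  classical
  set Z : Fin K → Ω → γ × β := fun k ω => (W k ω, V k ω) with hZ
  have hZm : ∀ k, Measurable (Z k) := fun k => (hW k).prodMk (hV k)
  have hsingle : ∀ (z : Fin K → γ × β), P (⋂ k, {ω | Z k ω = z k})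
      = ∏ k, P {ω | Z k ω = z k} := by
    intro z
    have h1 : ∀ k, {ω | Z k ω = z k} = W k ⁻¹' {(z k).1} ∩ V k ⁻¹' {(z k).2} := by
      intro k; ext ω
      simp [hZ, Prod.ext_iff]
    calc P (⋂ k, {ω | Z k ω = z k})
        = P (⋂ k, (W k ⁻¹' {(z k).1} ∩ V k ⁻¹' {(z k).2})) := by
          congr 1; exact Set.iInter_congr h1
      _ = ∏ k, P (W k ⁻¹' {(z k).1} ∩ V k ⁻¹' {(z k).2}) :=
          meas_iInter_WV P W V ξ U hindep _ _ (fun _ => measurableSet_singleton _)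
            (fun _ => measurableSet_singleton _)
      _ = ∏ k, P {ω | Z k ω = z k} := Finset.prod_congr rfl fun k _ => by rw [h1 k]
  set Q' : Fin K → Finset (γ × β) := fun k => (Q k).toFinset with hQ'
  have hmem : ∀ k (p : γ × β), p ∈ Q' k ↔ p ∈ Q k := by
    intro k p; simp [hQ']
  -- decompose single coordinate events
  have hsplit1 : ∀ k, P {ω | Z k ω ∈ Q k} = ∑ p ∈ Q' k, P {ω | Z k ω = p} := by
    intro k
    have : {ω | Z k ω ∈ Q k} = ⋃ p ∈ Q' k, {ω | Z k ω = p} := by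
      ext ω; simp [hmem]
    rw [this, measure_biUnion_finset]
    · intro p _ q _ hpq
      simp only [Function.onFun, Set.disjoint_left]
      intro ω h1 h2
      have e1 : Z k ω = p := h1
      have e2 : Z k ω = q := h2
      exact hpq (e1.symm.trans e2)
    · intro p _; exact hZm k (measurableSet_singleton p)
  -- decompose the big intersection
  have hsplitK : P (⋂ k, {ω | Z k ω ∈ Q k})
      = ∑ z ∈ Fintype.piFinset Q', P (⋂ k, {ω | Z k ω = z k}) := by
    have : (⋂ k, {ω | Z k ω ∈ Q k})
        = ⋃ z ∈ Fintype.piFinset Q', ⋂ k, {ω | Z k ω = z k} := by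
      ext ω
      simp only [Set.mem_iInter, Set.mem_setOf_eq, Set.mem_iUnion,
        Fintype.mem_piFinset]
      constructor
      · intro h
        exact ⟨fun k => Z k ω, fun k => (hmem k _).mpr (h k), fun k => rfl⟩
      · rintro ⟨z, hz, he⟩ k
        rw [he k]; exact (hmem k _).mp (hz k)
    rw [this, measure_biUnion_finset]
    · intro z hz y hy hzy
      simp only [Function.onFun, Set.disjoint_left, Set.mem_iInter, Set.mem_setOf_eq]
      intro ω h1 h2
      exact hzy (funext fun k => (h1 k).symm.trans (h2 k))
    · intro z _
      exact MeasurableSet.iInter fun k => hZm k (measurableSet_singleton _)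
  calc P (⋂ k, {ω | Z k ω ∈ Q k})
      = ∑ z ∈ Fintype.piFinset Q', P (⋂ k, {ω | Z k ω = z k}) := hsplitK
    _ = ∑ z ∈ Fintype.piFinset Q', ∏ k, P {ω | Z k ω = z k} := by
        exact Finset.sum_congr rfl fun z _ => hsingle z
    _ = ∏ k, ∑ p ∈ Q' k, P {ω | Z k ω = p} := (Finset.prod_univ_sum Q' (fun k p => P {ω | Z k ω = p})).symm
    _ = ∏ k, P {ω | Z k ω ∈ Q k} := Finset.prod_congr rfl fun k _ => (hsplit1 k).symm

end Indep

/-- **Lemma 2(c) (discrete form).** In the observational model, the confounders are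
conditionally independent given all the actions. -/
theorem confounders_conditionally_independent_given_actions
    {Ω : Type} [MeasurableSpace Ω] (P : MeasureTheory.Measure Ω) [MeasureTheory.IsProbabilityMeasure P]
    {K : ℕ} (hK : 1 ≤ K)
    {α β γ : Type} [Fintype α] [Nonempty α] [MeasurableSpace α] [MeasurableSingletonClass α]
    [Fintype β] [Nonempty β] [MeasurableSpace β] [MeasurableSingletonClass β]
    [Fintype γ] [Nonempty γ] [MeasurableSpace γ] [MeasurableSingletonClass γ]
    (W : Fin K → Ω → γ) (V : Fin K → Ω → β) (ξ : Fin K → Ω → α) (U : Ω → ℝ)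
    (hW : ∀ k, Measurable (W k)) (hV : ∀ k, Measurable (V k))
    (hξ : ∀ k, Measurable (ξ k)) (hU : Measurable U)
    (hindep : iIndepFun (m := noiseMS K α β γ) (noiseFam W V ξ U) P)
    (hUint : MeasureTheory.Integrable U P) (hU0 : ∫ ω, U ω ∂P = 0)
    (g : (k : Fin K) → ((i : Fin K) → i < k → α) → γ → β → α)
    (f : Fin K → α → γ → ℝ)
    (a : Fin K → α) (ha : 0 < P (eventEq (Aobs g W V) a)) (c : Fin K → γ) :
    (P[|eventEq (Aobs g W V) a]) (⋂ k, {ω | W k ω = c k})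
      = ∏ k, (P[|eventEq (Aobs g W V) a]) {ω | W k ω = c k} := by
  classical
  set E : Fin K → Set (γ × β) := fun k => {p | g k (fun i _ => a i) p.1 p.2 = a k} with hE
  set F : Fin K → Set (γ × β) := fun k => E k ∩ (Prod.fst ⁻¹' {c k}) with hF
  have hSset : eventEq (Aobs g W V) a = ⋂ k, {ω | (W k ω, V k ω) ∈ E k} := by
    rw [eventEq_Aobs]; rfl
  set r : Fin K → ℝ≥0∞ := fun k => P {ω | (W k ω, V k ω) ∈ E k} with hr
  set s : Fin K → ℝ≥0∞ := fun k => P {ω | (W k ω, V k ω) ∈ F k} with hs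
  have hPS : P (eventEq (Aobs g W V) a) = ∏ k, r k := by
    rw [hSset]; exact meas_iInter_pair P W V ξ U hindep hW hV E
  have hr0 : ∀ k, r k ≠ 0 := by
    intro k h0
    have h := ha.ne'
    rw [hPS] at h
    exact h (Finset.prod_eq_zero (Finset.mem_univ k) h0)
  have hrt : ∀ k, r k ≠ ∞ := fun k => measure_ne_top P _
  have hSm : MeasurableSet (eventEq (Aobs g W V) a) := by
    rw [hSset]
    exact MeasurableSet.iInter fun k =>
      ((hW k).prodMk (hV k)) ((Set.to_countable (E k)).measurableSet)
  have hint : eventEq (Aobs g W V) a ∩ (⋂ k, {ω | W k ω = c k})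
      = ⋂ k, {ω | (W k ω, V k ω) ∈ F k} := by
    rw [hSset]; ext ω
    simp only [Set.mem_inter_iff, Set.mem_iInter, Set.mem_setOf_eq, hF,
      Set.mem_preimage, Set.mem_singleton_iff]
    exact ⟨fun ⟨h1, h2⟩ k => ⟨h1 k, h2 k⟩, fun h => ⟨fun k => (h k).1, fun k => (h k).2⟩⟩
  have hints : ∀ k, eventEq (Aobs g W V) a ∩ {ω | W k ω = c k}
      = ⋂ j, {ω | (W j ω, V j ω) ∈ (if j = k then F k else E j)} := by
    intro k
    rw [hSset]; ext ω
    simp only [Set.mem_inter_iff, Set.mem_iInter, Set.mem_setOf_eq]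
    constructor
    · rintro ⟨h1, h2⟩ j
      by_cases hj : j = k
      · subst hj
        simp only [if_pos rfl, hF]
        exact ⟨h1 j, h2⟩
      · simpa [if_neg hj] using h1 j
    · intro h
      constructor
      · intro j
        by_cases hj : j = k
        · subst hj
          have := h j
          rw [if_pos rfl] at this
          exact this.1
        · have := h j
          rwa [if_neg hj] at this
      · have := h k
        rw [if_pos rfl] at this
        exact this.2
  have hPs : ∀ k, P (eventEq (Aobs g W V) a ∩ {ω | W k ω = c k})
      = s k * ∏ j ∈ Finset.univ.erase k, r j := by
    intro k
    rw [hints k, meas_iInter_pair P W V ξ U hindep hW hV _,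
      ← Finset.mul_prod_erase Finset.univ _ (Finset.mem_univ k)]
    congr 1
    · rw [if_pos rfl]
    · exact Finset.prod_congr rfl fun j hj => by
        rw [if_neg (Finset.ne_of_mem_erase hj)]
  have hLHS : (P[|eventEq (Aobs g W V) a]) (⋂ k, {ω | W k ω = c k})
      = (∏ k, r k)⁻¹ * ∏ k, s k := by
    rw [cond_apply hSm, hint, meas_iInter_pair P W V ξ U hindep hW hV F, hPS]
  have hRHS : ∀ k, (P[|eventEq (Aobs g W V) a]) {ω | W k ω = c k}
      = (r k)⁻¹ * s k := by
    intro k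
    rw [cond_apply hSm, hPs k, hPS,
      ← Finset.mul_prod_erase Finset.univ r (Finset.mem_univ k)]
    set t := ∏ j ∈ Finset.univ.erase k, r j with ht
    have ht0 : t ≠ 0 := Finset.prod_ne_zero_iff.mpr fun j _ => hr0 j
    have htT : t ≠ ∞ := ENNReal.prod_ne_top fun j _ => hrt j
    rw [ENNReal.mul_inv (Or.inl (hr0 k)) (Or.inr ht0)]
    have hring : (r k)⁻¹ * t⁻¹ * (s k * t) = (r k)⁻¹ * s k * (t⁻¹ * t) := by ring
    rw [hring, ENNReal.inv_mul_cancel ht0 htT, mul_one]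
  calc (P[|eventEq (Aobs g W V) a]) (⋂ k, {ω | W k ω = c k})
      = (∏ k, r k)⁻¹ * ∏ k, s k := hLHS
    _ = ∏ k, ((r k)⁻¹ * s k) := by
        rw [ENNReal.prod_inv_distrib (fun i _ j _ _ => Or.inl (hr0 i)),
          ← Finset.prod_mul_distrib]
    _ = ∏ k, (P[|eventEq (Aobs g W V) a]) {ω | W k ω = c k} :=
        Finset.prod_congr rfl fun k _ => (hRHS k).symm
end
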